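/- arXiv:math/0701647 — 5 statements merged into one kernel-verified Lean document; each statement's English description precedes it below -/
import Mathlib

section
/- The number of maximal independent sets of the cycle graph C_n (n ≥ 3) equals p(n), where p is the Perrin sequence defined by p(1)=0, p(2)=2, p(3)=3, and p(n)=p(n-2)+p(n-3) for n ≥ 4. -/
/-- The Perrin sequence: p 1 = 0, p 2 = 2, p 3 = 3, p n = p (n-2) + p (n-3). -/
def perrin : ℕ → ℕ
  | 0 => 3
  | 1 => 0
  | 2 => 2
  | n + 3 => perrin (n + 1) + perrin n

/-- The Padovan sequence: q 1 = 0, q 2 = 1, q 3 = 1, q n = q (n-2) + q (n-3). -/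
def padovan : ℕ → ℕ
  | 0 => 1
  | 1 => 0
  | 2 => 1
  | n + 3 => padovan (n + 1) + padovan n

/-- r n = q k if n = 2k - 1 is odd, q (k+2) if n = 2k is even. -/
def rseq (n : ℕ) : ℕ := if n % 2 = 1 then padovan ((n + 1) / 2) else padovan (n / 2 + 2)

/-- The cycle graph C_n on vertex set ZMod n. -/
def cycleGraph (n : ℕ) : SimpleGraph (ZMod n) := SimpleGraph.fromRel (fun i j => j = i + 1)

/-- X is a maximal independent set of C_n. -/
def IsMIS (n : ℕ) (X : Set (ZMod n)) : Prop :=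
  X.Pairwise (fun a b => ¬ (cycleGraph n).Adj a b) ∧
  ∀ Y : Set (ZMod n), Y.Pairwise (fun a b => ¬ (cycleGraph n).Adj a b) → X ⊆ Y → X = Y

/-- The element of the dihedral group D_{2n} indexed by (k, ε) acts on ZMod n:
rotation σ^k (x ↦ x + k) if ε = false, reflection σ^k τ (x ↦ k - x) if ε = true. -/
def dihApply (n : ℕ) (g : ZMod n × Bool) (x : ZMod n) : ZMod n :=
  if g.2 then g.1 - x else x + g.1

/-- The orbit of X under the dihedral group D_{2n}. -/
def dOrbit (n : ℕ) (X : Set (ZMod n)) : Set (Set (ZMod n)) :=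
  {Y | ∃ g : ZMod n × Bool, dihApply n g '' X = Y}

/-- The stabilizer of X in the dihedral group D_{2n}. -/
def dStab (n : ℕ) (X : Set (ZMod n)) : Set (ZMod n × Bool) :=
  {g | dihApply n g '' X = X}

/-- The set of orbits of maximal independent sets of C_n under D_{2n}. -/
def misOrbits (n : ℕ) : Set (Set (Set (ZMod n))) :=
  {O | ∃ X, IsMIS n X ∧ O = dOrbit n X}

/-- orb n : the number of orbits of MISs of C_n under D_{2n}. -/
noncomputable def orb (n : ℕ) : ℕ := (misOrbits n).ncard

/-- orb_d n : the number of orbits of MISs of C_n whose elements have stabilizer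
of cardinality d (equivalently, orbits of size 2n/d). -/
noncomputable def orbd (d n : ℕ) : ℕ :=
  {O | ∃ X, IsMIS n X ∧ O = dOrbit n X ∧ (dStab n X).ncard = d}.ncard

/-- The rotation σ^k on ZMod n. -/
def rotApply (n : ℕ) (k : ZMod n) (x : ZMod n) : ZMod n := x + k

/-- The orbit of X under the cyclic rotation group ⟨σ⟩. -/
def rOrbit (n : ℕ) (X : Set (ZMod n)) : Set (Set (ZMod n)) :=
  {Y | ∃ k : ZMod n, rotApply n k '' X = Y}

/-- The stabilizer of X in the rotation group ⟨σ⟩. -/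
def rStab (n : ℕ) (X : Set (ZMod n)) : Set (ZMod n) :=
  {k | rotApply n k '' X = X}

/-- orb^σ n : the number of orbits of MISs of C_n under rotations (unlabeled MISs). -/
noncomputable def orbSigma (n : ℕ) : ℕ := {O | ∃ X, IsMIS n X ∧ O = rOrbit n X}.ncard

/-- orb^σ_d n : the number of rotation-orbits of MISs of C_n whose elements have
stabilizer of cardinality d in ⟨σ⟩. -/
noncomputable def orbdSigma (d n : ℕ) : ℕ :=
  {O | ∃ X, IsMIS n X ∧ O = rOrbit n X ∧ (rStab n X).ncard = d}.ncard

/-- X has at least one symmetry axis: it is fixed by some reflection x ↦ k - x. -/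
def HasAxis (n : ℕ) (X : Set (ZMod n)) : Prop := ∃ k : ZMod n, (fun x => k - x) '' X = X

/-- The number of orbits of MISs of C_n under D_{2n} whose elements have at least
one symmetry axis. -/
noncomputable def orbAxis (n : ℕ) : ℕ :=
  {O | ∃ X, IsMIS n X ∧ O = dOrbit n X ∧ HasAxis n X}.ncard

/-- Every part of the list is 2 or 3. -/
def parts23 (l : List ℕ) : Prop := ∀ a ∈ l, a = 2 ∨ a = 3

/-- The cyclic class of a composition: all rotations of the list. -/
def rotClass (l : List ℕ) : Set (List ℕ) := {m | ∃ k, m = l.rotate k}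

/-- The cyclic class of a composition up to rotation and reversal. -/
def rotRevClass (l : List ℕ) : Set (List ℕ) :=
  {m | ∃ k, m = l.rotate k ∨ m = l.reverse.rotate k}


/-! ### Auxiliary development for `num_MIS_eq_perrin` -/

/-- `misGood l` : `l` has no two adjacent `true`s and no three adjacent `false`s. -/
def misGood : List Bool → Bool
  | true :: true :: _ => false
  | false :: false :: false :: _ => false
  | _ :: l => misGood l
  | [] => true

/-- cyclic goodness -/
def misCyc (l : List Bool) : Bool := misGood (l ++ l.take 2)

/-- number of lists of length `n` satisfying `P` -/
def misCnt (P : List Bool → Bool) : ℕ → ℕ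
  | 0 => if P [] then 1 else 0
  | n + 1 => misCnt (fun l => P (true :: l)) n + misCnt (fun l => P (false :: l)) n

lemma misCnt_congr {P Q : List Bool → Bool} (h : ∀ l, P l = Q l) (n : ℕ) :
    misCnt P n = misCnt Q n := by
  have : P = Q := funext h
  rw [this]

lemma misCnt_false : ∀ n, misCnt (fun _ => false) n = 0
  | 0 => rfl
  | n + 1 => by
    show misCnt (fun _ => false) n + misCnt (fun _ => false) n = 0
    rw [misCnt_false n]

def mg1 (s : List Bool) (n : ℕ) : ℕ := misCnt (fun t => misGood (true :: (t ++ s))) n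
def mg0 (s : List Bool) (n : ℕ) : ℕ := misCnt (fun t => misGood (false :: (t ++ s))) n
def mg00 (s : List Bool) (n : ℕ) : ℕ := misCnt (fun t => misGood (false :: false :: (t ++ s))) n

lemma mg1_succ (s n) : mg1 s (n + 1) = mg0 s n := by
  have h1 : misCnt (fun t => misGood (true :: true :: (t ++ s))) n = 0 :=
    (misCnt_congr (Q := fun _ => false) (fun l => rfl) n).trans (misCnt_false n)
  have h2 : misCnt (fun t => misGood (true :: false :: (t ++ s))) n = mg0 s n :=
    misCnt_congr (fun l => rfl) n
  show misCnt (fun t => misGood (true :: true :: (t ++ s))) n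
      + misCnt (fun t => misGood (true :: false :: (t ++ s))) n = mg0 s n
  rw [h1, h2, Nat.zero_add]

lemma mg0_succ (s n) : mg0 s (n + 1) = mg1 s n + mg00 s n := by
  have h1 : misCnt (fun t => misGood (false :: true :: (t ++ s))) n = mg1 s n :=
    misCnt_congr (fun l => rfl) n
  show misCnt (fun t => misGood (false :: true :: (t ++ s))) n
      + misCnt (fun t => misGood (false :: false :: (t ++ s))) n = mg1 s n + mg00 s n
  rw [h1]; rfl

lemma mg00_succ (s n) : mg00 s (n + 1) = mg1 s n := by
  have h1 : misCnt (fun t => misGood (false :: false :: true :: (t ++ s))) n = mg1 s n :=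
    misCnt_congr (fun l => rfl) n
  have h2 : misCnt (fun t => misGood (false :: false :: false :: (t ++ s))) n = 0 :=
    (misCnt_congr (Q := fun _ => false) (fun l => rfl) n).trans (misCnt_false n)
  show misCnt (fun t => misGood (false :: false :: true :: (t ++ s))) n
      + misCnt (fun t => misGood (false :: false :: false :: (t ++ s))) n = mg1 s n
  rw [h1, h2, Nat.add_zero]

lemma mg1_rec (s n) : mg1 s (n + 3) = mg1 s (n + 1) + mg1 s n := by
  calc mg1 s (n + 3) = mg0 s (n + 2) := mg1_succ s (n + 2)
    _ = mg1 s (n + 1) + mg00 s (n + 1) := mg0_succ s (n + 1)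
    _ = mg1 s (n + 1) + mg1 s n := by rw [mg00_succ s n]

lemma mg0_rec (s n) : mg0 s (n + 3) = mg0 s (n + 1) + mg0 s n := by
  calc mg0 s (n + 3) = mg1 s (n + 2) + mg00 s (n + 2) := mg0_succ s (n + 2)
    _ = mg0 s (n + 1) + mg1 s (n + 1) := by rw [mg1_succ s (n + 1), mg00_succ s (n + 1)]
    _ = mg0 s (n + 1) + mg0 s n := by rw [mg1_succ s n]

lemma mg00_rec (s n) : mg00 s (n + 3) = mg00 s (n + 1) + mg00 s n := by
  calc mg00 s (n + 3) = mg1 s (n + 2) := mg00_succ s (n + 2)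
    _ = mg0 s (n + 1) := mg1_succ s (n + 1)
    _ = mg1 s n + mg00 s n := mg0_succ s n
    _ = mg00 s (n + 1) + mg00 s n := by rw [mg00_succ s n]

lemma misF_split (m : ℕ) : misCnt misCyc (m + 2) =
    mg0 [true, false] m + (mg1 [false, true] m + mg00 [false, false] m) := by
  have h1 : misCnt (fun t => misCyc (true :: true :: t)) m = 0 :=
    (misCnt_congr (Q := fun _ => false) (fun l => rfl) m).trans (misCnt_false m)
  have h2 : misCnt (fun t => misCyc (true :: false :: t)) m = mg0 [true, false] m :=
    misCnt_congr (fun l => rfl) m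
  have h3 : misCnt (fun t => misCyc (false :: true :: t)) m = mg1 [false, true] m :=
    misCnt_congr (fun l => rfl) m
  have h4 : misCnt (fun t => misCyc (false :: false :: t)) m = mg00 [false, false] m :=
    misCnt_congr (fun l => rfl) m
  show misCnt (fun t => misCyc (true :: true :: t)) m
      + misCnt (fun t => misCyc (true :: false :: t)) m
      + (misCnt (fun t => misCyc (false :: true :: t)) m
      + misCnt (fun t => misCyc (false :: false :: t)) m) = _
  rw [h1, h2, h3, h4, Nat.zero_add]

lemma misF_rec (m : ℕ) : misCnt misCyc (m + 5) = misCnt misCyc (m + 3) + misCnt misCyc (m + 2) := by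
  calc misCnt misCyc (m + 5)
      = mg0 [true, false] (m + 3) + (mg1 [false, true] (m + 3) + mg00 [false, false] (m + 3)) :=
        misF_split (m + 3)
    _ = (mg0 [true, false] (m + 1) + mg0 [true, false] m)
        + ((mg1 [false, true] (m + 1) + mg1 [false, true] m)
        + (mg00 [false, false] (m + 1) + mg00 [false, false] m)) := by
        rw [mg0_rec, mg1_rec, mg00_rec]
    _ = (mg0 [true, false] (m + 1) + (mg1 [false, true] (m + 1) + mg00 [false, false] (m + 1)))
        + (mg0 [true, false] m + (mg1 [false, true] m + mg00 [false, false] m)) := by ring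
    _ = misCnt misCyc (m + 3) + misCnt misCyc (m + 2) := by
        rw [← misF_split m, ← misF_split (m + 1)]

lemma misF_eq_perrin : ∀ m, misCnt misCyc (m + 2) = perrin (m + 2) ∧
    misCnt misCyc (m + 3) = perrin (m + 3) ∧ misCnt misCyc (m + 4) = perrin (m + 4) := by
  intro m
  induction m with
  | zero => exact ⟨by decide, by decide, by decide⟩
  | succ k ih =>
    refine ⟨ih.2.1, ih.2.2, ?_⟩
    have e1 : k + 1 + 4 = k + 5 := by omega
    have e2 : perrin (k + 5) = perrin (k + 3) + perrin (k + 2) := rfl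
    rw [e1, misF_rec k, e2, ih.2.1, ih.1]

def noPair (l : List Bool) : Prop :=
  ∀ i : ℕ, ¬(l[i]? = some true ∧ l[i + 1]? = some true)

def noTriple (l : List Bool) : Prop :=
  ∀ i : ℕ, ¬(l[i]? = some false ∧ l[i + 1]? = some false ∧ l[i + 2]? = some false)

lemma noPair_nil : noPair [] := by intro i; simp

lemma noTriple_nil : noTriple [] := by intro i; simp

lemma noPair_cons (a : Bool) (l : List Bool) :
    noPair (a :: l) ↔ ¬(a = true ∧ l[0]? = some true) ∧ noPair l := by
  constructor
  · intro h
    refine ⟨fun hh => h 0 (by simpa using hh), fun i => by simpa using h (i + 1)⟩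
  · rintro ⟨h0, h⟩ i
    cases i with
    | zero => simpa using h0
    | succ j => simpa using h j

lemma noTriple_cons (a : Bool) (l : List Bool) :
    noTriple (a :: l) ↔ ¬(a = false ∧ l[0]? = some false ∧ l[1]? = some false) ∧ noTriple l := by
  constructor
  · intro h
    refine ⟨fun hh => h 0 (by simpa using hh), fun i => by simpa using h (i + 1)⟩
  · rintro ⟨h0, h⟩ i
    cases i with
    | zero => simpa using h0
    | succ j => simpa using h j

theorem misGood_iff : ∀ l : List Bool, misGood l = true ↔ noPair l ∧ noTriple l
  | [] => by simpa [misGood] using ⟨noPair_nil, noTriple_nil⟩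
  | [a] => by
    cases a <;>
      simp [misGood, noPair_cons, noTriple_cons, noPair_nil, noTriple_nil]
  | true :: true :: l => by
    simp [misGood, noPair_cons]
  | true :: false :: l => by
    rw [show misGood (true :: false :: l) = misGood (false :: l) from rfl,
      misGood_iff (false :: l)]
    simp [noPair_cons, noTriple_cons]
  | false :: true :: l => by
    rw [show misGood (false :: true :: l) = misGood (true :: l) from rfl,
      misGood_iff (true :: l)]
    simp [noPair_cons, noTriple_cons]
  | [false, false] => by
    simp [misGood, noPair_cons, noTriple_cons, noPair_nil, noTriple_nil]
  | false :: false :: true :: l => by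
    rw [show misGood (false :: false :: true :: l) = misGood (true :: l) from rfl,
      misGood_iff (true :: l)]
    simp [noPair_cons, noTriple_cons]
  | false :: false :: false :: l => by
    simp [misGood, noTriple_cons]
  termination_by l => l.length

section Bridge

variable {n : ℕ} [NeZero n]

def zList (n : ℕ) [NeZero n] (f : ZMod n → Bool) : List Bool :=
  List.ofFn (fun i : Fin n => f ((i : ℕ) : ZMod n))

lemma zList_length (f : ZMod n → Bool) : (zList n f).length = n := by
  simp [zList]

lemma zList_get (f : ZMod n → Bool) (j : ℕ) (hj : j < n) :
    (zList n f)[j]? = some (f ((j : ℕ) : ZMod n)) := by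
  simp [zList, List.getElem?_ofFn, List.ofFnNthVal, hj]

def zL (n : ℕ) [NeZero n] (f : ZMod n → Bool) : List Bool :=
  zList n f ++ (zList n f).take 2

lemma zL_length (hn3 : 3 ≤ n) (f : ZMod n → Bool) : (zL n f).length = n + 2 := by
  simp [zL, zList_length]
  omega

lemma zL_get (hn3 : 3 ≤ n) (f : ZMod n → Bool) (j : ℕ) (hj : j < n + 2) :
    (zL n f)[j]? = some (f ((j : ℕ) : ZMod n)) := by
  by_cases h : j < n
  · rw [zL, List.getElem?_append_left (by rw [zList_length]; exact h)]
    exact zList_get f j h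
  · rw [zL, List.getElem?_append_right (by rw [zList_length]; omega), zList_length,
      List.getElem?_take_of_lt (by omega), zList_get f (j - n) (by omega)]
    have hjj : (j : ℕ) = (j - n) + n := by omega
    congr 1
    apply congrArg f
    conv_rhs => rw [hjj]
    push_cast [ZMod.natCast_self]
    ring

lemma zL_get_none (hn3 : 3 ≤ n) (f : ZMod n → Bool) (j : ℕ) (hj : n + 2 ≤ j) :
    (zL n f)[j]? = none := by
  rw [List.getElem?_eq_none]
  rw [zL_length hn3]
  exact hj

lemma misCyc_iff (hn3 : 3 ≤ n) (f : ZMod n → Bool) :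
    misCyc (List.ofFn (fun i : Fin n => f ((i : ℕ) : ZMod n))) = true ↔
    ∀ x : ZMod n, ¬(f x = true ∧ f (x + 1) = true) ∧
      (f x = true ∨ f (x + 1) = true ∨ f (x + 2) = true) := by
  rw [show misCyc (List.ofFn (fun i : Fin n => f ((i : ℕ) : ZMod n))) = misGood (zL n f) from rfl,
    misGood_iff]
  constructor
  · rintro ⟨hp, ht⟩ x
    have hj : x.val < n := ZMod.val_lt x
    have hx : ((x.val : ℕ) : ZMod n) = x := ZMod.natCast_rightInverse x
    have e0 : (zL n f)[x.val]? = some (f x) := by rw [zL_get hn3 f _ (by omega), hx]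
    have e1 : (zL n f)[x.val + 1]? = some (f (x + 1)) := by
      rw [zL_get hn3 f _ (by omega)]
      congr 2
      push_cast [hx]
      ring
    have e2 : (zL n f)[x.val + 2]? = some (f (x + 2)) := by
      rw [zL_get hn3 f _ (by omega)]
      congr 2
      push_cast [hx]
      ring
    constructor
    · rintro ⟨ha, hb⟩
      exact hp x.val ⟨by rw [e0, ha], by rw [e1, hb]⟩
    · have h3 := ht x.val
      rw [e0, e1, e2] at h3
      cases hA : f x <;> cases hB : f (x + 1) <;> cases hC : f (x + 2) <;> simp_all
  · intro h
    constructor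
    · intro j
      rintro ⟨ha, hb⟩
      have hj : j + 1 < n + 2 := by
        by_contra hc
        rw [zL_get_none hn3 f (j + 1) (by omega)] at hb
        exact Option.some_ne_none _ hb.symm
      rw [zL_get hn3 f j (by omega)] at ha
      rw [zL_get hn3 f (j + 1) (by omega)] at hb
      have hx1 : ((j + 1 : ℕ) : ZMod n) = ((j : ℕ) : ZMod n) + 1 := by push_cast; ring
      rw [hx1] at hb
      exact (h ((j : ℕ) : ZMod n)).1 ⟨by simpa using ha, by simpa using hb⟩
    · intro j
      rintro ⟨ha, hb, hc⟩
      have hj : j + 2 < n + 2 := by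
        by_contra hcc
        rw [zL_get_none hn3 f (j + 2) (by omega)] at hc
        exact Option.some_ne_none _ hc.symm
      rw [zL_get hn3 f j (by omega)] at ha
      rw [zL_get hn3 f (j + 1) (by omega)] at hb
      rw [zL_get hn3 f (j + 2) (by omega)] at hc
      have hx1 : ((j + 1 : ℕ) : ZMod n) = ((j : ℕ) : ZMod n) + 1 := by push_cast; ring
      have hx2 : ((j + 2 : ℕ) : ZMod n) = ((j : ℕ) : ZMod n) + 2 := by push_cast; ring
      rw [hx1] at hb
      rw [hx2] at hc
      have h2 := (h ((j : ℕ) : ZMod n)).2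
      simp only [Option.some_inj] at ha hb hc
      rw [ha, hb, hc] at h2
      simp at h2

end Bridge

lemma card_misCnt : ∀ (n : ℕ) (P : List Bool → Bool),
    Nat.card {g : Fin n → Bool // P (List.ofFn g) = true} = misCnt P n := by
  intro n
  induction n with
  | zero =>
    intro P
    show _ = if P [] then 1 else 0
    cases hP : P [] with
    | false =>
      haveI : IsEmpty {g : Fin 0 → Bool // P (List.ofFn g) = true} := by
        constructor
        rintro ⟨g, hg⟩
        rw [List.ofFn_zero, hP] at hg
        exact Bool.noConfusion hg
      rw [if_neg Bool.false_ne_true]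
      exact Nat.card_of_isEmpty
    | true =>
      haveI : Unique {g : Fin 0 → Bool // P (List.ofFn g) = true} := by
        refine ⟨⟨⟨fun i => i.elim0, by rw [List.ofFn_zero, hP]⟩⟩, ?_⟩
        rintro ⟨g, hg⟩
        apply Subtype.ext
        funext i
        exact i.elim0
      rw [if_pos rfl]
      exact Nat.card_unique
  | succ n ih =>
    intro P
    have e1 : {g : Fin (n + 1) → Bool // P (List.ofFn g) = true} ≃
        {x : Bool × (Fin n → Bool) // P (x.1 :: List.ofFn x.2) = true} := by
      refine ((Fin.consEquiv (fun _ : Fin (n + 1) => Bool)).symm.subtypeEquiv ?_)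
      intro g
      rw [List.ofFn_succ]
      rfl
    have e2 : {x : Bool × (Fin n → Bool) // P (x.1 :: List.ofFn x.2) = true} ≃
        Σ b : Bool, {g : Fin n → Bool // P (b :: List.ofFn g) = true} :=
      Equiv.subtypeProdEquivSigmaSubtype (fun b g => P (b :: List.ofFn g) = true)
    have e3 : (Σ b : Bool, {g : Fin n → Bool // P (b :: List.ofFn g) = true}) ≃
        {g : Fin n → Bool // P (true :: List.ofFn g) = true}
        ⊕ {g : Fin n → Bool // P (false :: List.ofFn g) = true} :=
      { toFun := fun x => match x with
          | ⟨true, y⟩ => Sum.inl y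
          | ⟨false, y⟩ => Sum.inr y
        invFun := fun x => match x with
          | Sum.inl y => ⟨true, y⟩
          | Sum.inr y => ⟨false, y⟩
        left_inv := by rintro ⟨b, y⟩; cases b <;> rfl
        right_inv := by rintro (y | y) <;> rfl }
    rw [Nat.card_congr (e1.trans (e2.trans e3)), Nat.card_sum,
      ih (fun l => P (true :: l)), ih (fun l => P (false :: l))]
    rfl

lemma isMIS_iff (n : ℕ) (hn : 3 ≤ n) (X : Set (ZMod n)) :
    IsMIS n X ↔ ∀ x : ZMod n, ¬(x ∈ X ∧ x + 1 ∈ X) ∧ (x ∈ X ∨ x + 1 ∈ X ∨ x + 2 ∈ X) := by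
  haveI : NeZero n := ⟨by omega⟩
  haveI : Fact (1 < n) := ⟨by omega⟩
  have h10 : (1 : ZMod n) ≠ 0 := one_ne_zero
  have hne : ∀ x : ZMod n, x + 1 ≠ x := fun x h => h10 (add_eq_left.mp h)
  have adj_iff : ∀ a b : ZMod n, (cycleGraph n).Adj a b ↔ a ≠ b ∧ (b = a + 1 ∨ a = b + 1) :=
    fun a b => SimpleGraph.fromRel_adj _ a b
  constructor
  · rintro ⟨hind, hmax⟩
    have hdom : ∀ x : ZMod n, x ∉ X → (x + 1 ∈ X ∨ x - 1 ∈ X) := by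
      intro x hx
      by_contra hc
      push_neg at hc
      have hY : (X ∪ {x}).Pairwise (fun a b => ¬ (cycleGraph n).Adj a b) := by
        rintro a (ha | ha) b (hb | hb) hab hadj
        · exact hind ha hb hab hadj
        · rw [Set.mem_singleton_iff] at hb
          subst hb
          rcases (adj_iff a b).mp hadj with ⟨_, h1 | h1⟩
          · exact hc.2 (by rw [show b - 1 = a from by rw [h1]; ring]; exact ha)
          · exact hc.1 (h1 ▸ ha)
        · rw [Set.mem_singleton_iff] at ha
          subst ha
          rcases (adj_iff a b).mp hadj with ⟨_, h1 | h1⟩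
          · exact hc.1 (h1 ▸ hb)
          · exact hc.2 (by rw [show a - 1 = b from by rw [h1]; ring]; exact hb)
        · rw [Set.mem_singleton_iff] at ha hb
          exact hab (ha.trans hb.symm)
      have heq := hmax _ hY Set.subset_union_left
      exact hx (heq ▸ Set.mem_union_right X rfl)
    intro x
    constructor
    · rintro ⟨h1, h2⟩
      exact hind h1 h2 (fun h => hne x h.symm)
        ((adj_iff x (x + 1)).mpr ⟨fun h => hne x h.symm, Or.inl rfl⟩)
    · by_cases h1 : x ∈ X
      · exact Or.inl h1
      by_cases h2 : x + 1 ∈ X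
      · exact Or.inr (Or.inl h2)
      refine Or.inr (Or.inr ?_)
      rcases hdom (x + 1) h2 with h | h
      · rwa [show x + 1 + 1 = x + 2 from by ring] at h
      · exact absurd (by rwa [show x + 1 - 1 = x from by ring] at h) h1
  · intro h
    constructor
    · intro a ha b hb hab hadj
      rcases (adj_iff a b).mp hadj with ⟨_, h1 | h1⟩
      · exact (h a).1 ⟨ha, h1 ▸ hb⟩
      · exact (h b).1 ⟨hb, h1 ▸ ha⟩
    · intro Y hY hXY
      apply Set.Subset.antisymm hXY
      intro y hy
      by_contra hyX
      have case1 : y + 1 ∈ X ∨ y - 1 ∈ X := by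
        rcases (h y).2 with h0 | h0 | h0
        · exact absurd h0 hyX
        · exact Or.inl h0
        · rcases (h (y - 1)).2 with h1 | h1 | h1
          · exact Or.inr h1
          · rw [show y - 1 + 1 = y from by ring] at h1
            exact absurd h1 hyX
          · rw [show y - 1 + 2 = y + 1 from by ring] at h1
            exact Or.inl h1
      rcases case1 with hnb | hnb
      · exact hY hy (hXY hnb) (fun he => hne y he.symm)
          ((adj_iff y (y + 1)).mpr ⟨fun he => hne y he.symm, Or.inl rfl⟩)
      · refine hY hy (hXY hnb) (fun he => hne (y - 1) ?_)
          ((adj_iff y (y - 1)).mpr ⟨fun he => hne (y - 1) ?_, Or.inr (by ring)⟩)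
        · rw [show y - 1 + 1 = y from by ring]
          exact he
        · rw [show y - 1 + 1 = y from by ring]
          exact he

def zmodFinEquiv (n : ℕ) [NeZero n] : Fin n ≃ ZMod n where
  toFun i := ((i : ℕ) : ZMod n)
  invFun x := ⟨x.val, ZMod.val_lt x⟩
  left_inv i := Fin.ext (by simp [ZMod.val_cast_of_lt i.isLt])
  right_inv x := ZMod.natCast_rightInverse x


/-- The number of maximal independent sets of C_n (n ≥ 3) equals the n-th Perrin number. -/
theorem num_MIS_eq_perrin (n : ℕ) (hn : 3 ≤ n) :
    {X : Set (ZMod n) | IsMIS n X}.ncard = perrin n := by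
  haveI : NeZero n := ⟨by omega⟩
  have hset : {X : Set (ZMod n) | IsMIS n X} =
      {X : Set (ZMod n) | ∀ x : ZMod n,
        ¬(x ∈ X ∧ x + 1 ∈ X) ∧ (x ∈ X ∨ x + 1 ∈ X ∨ x + 2 ∈ X)} :=
    Set.ext fun X => isMIS_iff n hn X
  rw [hset]
  have hcard : {X : Set (ZMod n) | ∀ x : ZMod n,
      ¬(x ∈ X ∧ x + 1 ∈ X) ∧ (x ∈ X ∨ x + 1 ∈ X ∨ x + 2 ∈ X)}.ncard =
      Nat.card {X : Set (ZMod n) // ∀ x : ZMod n,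
        ¬(x ∈ X ∧ x + 1 ∈ X) ∧ (x ∈ X ∨ x + 1 ∈ X ∨ x + 2 ∈ X)} :=
    (Nat.card_coe_set_eq _).symm
  rw [hcard]
  have hb : ∀ p : Prop, (Equiv.propEquivBool p = true) ↔ p := fun p => by
    simp [Equiv.propEquivBool]
  have E1 : {X : Set (ZMod n) // ∀ x : ZMod n,
      ¬(x ∈ X ∧ x + 1 ∈ X) ∧ (x ∈ X ∨ x + 1 ∈ X ∨ x + 2 ∈ X)} ≃
      {f : ZMod n → Bool // ∀ x : ZMod n,
        ¬(f x = true ∧ f (x + 1) = true) ∧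
        (f x = true ∨ f (x + 1) = true ∨ f (x + 2) = true)} := by
    refine Equiv.subtypeEquiv
      (Equiv.arrowCongr (Equiv.refl (ZMod n)) Equiv.propEquivBool) ?_
    intro X
    show (∀ x : ZMod n, ¬(X x ∧ X (x + 1)) ∧ (X x ∨ X (x + 1) ∨ X (x + 2))) ↔
      (∀ x : ZMod n,
        ¬(Equiv.propEquivBool (X x) = true ∧ Equiv.propEquivBool (X (x + 1)) = true) ∧
        (Equiv.propEquivBool (X x) = true ∨ Equiv.propEquivBool (X (x + 1)) = true ∨
          Equiv.propEquivBool (X (x + 2)) = true))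
    simp only [hb]
  have E2 : {f : ZMod n → Bool // ∀ x : ZMod n,
      ¬(f x = true ∧ f (x + 1) = true) ∧
      (f x = true ∨ f (x + 1) = true ∨ f (x + 2) = true)} ≃
      {g : Fin n → Bool // misCyc (List.ofFn g) = true} := by
    refine Equiv.subtypeEquiv
      (Equiv.arrowCongr (zmodFinEquiv n).symm (Equiv.refl Bool)) ?_
    intro f
    exact (misCyc_iff hn f).symm
  rw [Nat.card_congr (E1.trans E2), card_misCnt n misCyc]
  obtain ⟨m, rfl⟩ : ∃ m, n = m + 2 := ⟨n - 2, by omega⟩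
  exact (misF_eq_perrin m).1
end

section
/- Define r(n) = q(k) if n = 2k-1 is odd and r(n) = q(k+2) if n = 2k is even, where q is the Padovan sequence. Then r satisfies the recurrence r(n) = r(n-4) + r(n-6) for all n ≥ 7. -/
/-- r satisfies r(n) = r(n-4) + r(n-6) for n ≥ 7. -/
theorem rseq_recurrence (n : ℕ) (hn : 7 ≤ n) : rseq n = rseq (n - 4) + rseq (n - 6) := by
  obtain ⟨m, rfl⟩ : ∃ m, n = m + 7 := ⟨n - 7, by omega⟩
  rcases Nat.even_or_odd m with ⟨k, hk⟩ | ⟨k, hk⟩ <;> subst hk <;> simp only [rseq]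
  · have h1 : (k + k + 7) % 2 = 1 := by omega
    have h2 : (k + k + 7 - 4) % 2 = 1 := by omega
    have h3 : (k + k + 7 - 6) % 2 = 1 := by omega
    rw [if_pos h1, if_pos h2, if_pos h3]
    have e1 : (k + k + 7 + 1) / 2 = k + 1 + 3 := by omega
    have e2 : (k + k + 7 - 4 + 1) / 2 = k + 2 := by omega
    have e3 : (k + k + 7 - 6 + 1) / 2 = k + 1 := by omega
    rw [e1, e2, e3]
    show padovan (k + 1 + 3) = _
    rw [padovan]
  · have h1 : (2 * k + 1 + 7) % 2 = 0 := by omega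
    have h2 : (2 * k + 1 + 7 - 4) % 2 = 0 := by omega
    have h3 : (2 * k + 1 + 7 - 6) % 2 = 0 := by omega
    rw [if_neg (by omega), if_neg (by omega), if_neg (by omega)]
    have e1 : (2 * k + 1 + 7) / 2 + 2 = k + 3 + 3 := by omega
    have e2 : (2 * k + 1 + 7 - 4) / 2 + 2 = k + 4 := by omega
    have e3 : (2 * k + 1 + 7 - 6) / 2 + 2 = k + 3 := by omega
    rw [e1, e2, e3]
    rw [show k + 3 + 3 = k + 3 + 3 from rfl, padovan]
end

section
/- The number of orbits of maximal independent sets of C_n under the dihedral group D_{2n} whose elements have stabilizer contained in the rotation subgroup ⟨σ⟩ equals Σ_{d | n} orb_1(d), where orb_1(d) is the number of orbits of maximal independent sets of C_d on which D_{2d} acts freely (trivial stabilizer). -/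
namespace OrbAux

def dmul (n : ℕ) (g h : ZMod n × Bool) : ZMod n × Bool :=
  (if g.2 then g.1 - h.1 else g.1 + h.1, xor g.2 h.2)

def dinv (n : ℕ) (g : ZMod n × Bool) : ZMod n × Bool :=
  (if g.2 then g.1 else -g.1, g.2)

lemma dihApply_one (n : ℕ) (x : ZMod n) : dihApply n (0, false) x = x := by
  simp [dihApply]

lemma dihApply_dmul (n : ℕ) (g h : ZMod n × Bool) (x : ZMod n) :
    dihApply n (dmul n g h) x = dihApply n g (dihApply n h x) := by
  rcases g with ⟨k, _ | _⟩ <;> rcases h with ⟨l, _ | _⟩ <;>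
    simp [dihApply, dmul] <;> ring

lemma dmul_dinv (n : ℕ) (g : ZMod n × Bool) : dmul n g (dinv n g) = (0, false) := by
  rcases g with ⟨k, _ | _⟩ <;> simp [dmul, dinv]

lemma dinv_dmul (n : ℕ) (g : ZMod n × Bool) : dmul n (dinv n g) g = (0, false) := by
  rcases g with ⟨k, _ | _⟩ <;> simp [dmul, dinv]

lemma image_one (n : ℕ) (X : Set (ZMod n)) : dihApply n (0, false) '' X = X := by
  have : dihApply n (0, false) = id := funext (dihApply_one n)
  rw [this, Set.image_id]

lemma image_dmul (n : ℕ) (g h : ZMod n × Bool) (X : Set (ZMod n)) :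
    dihApply n g '' (dihApply n h '' X) = dihApply n (dmul n g h) '' X := by
  rw [Set.image_image]
  exact Set.image_congr fun x _ => (dihApply_dmul n g h x).symm

lemma image_dinv_cancel (n : ℕ) (g : ZMod n × Bool) (X : Set (ZMod n)) :
    dihApply n (dinv n g) '' (dihApply n g '' X) = X := by
  rw [image_dmul, dinv_dmul, image_one]

lemma image_cancel (n : ℕ) (g : ZMod n × Bool) (X : Set (ZMod n)) :
    dihApply n g '' (dihApply n (dinv n g) '' X) = X := by
  rw [image_dmul, dmul_dinv, image_one]

lemma image_eq_image_iff (n : ℕ) (g : ZMod n × Bool) (X Z : Set (ZMod n)) :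
    dihApply n g '' X = dihApply n g '' Z ↔ X = Z := by
  constructor
  · intro h
    have := congrArg (fun W => dihApply n (dinv n g) '' W) h
    simpa [image_dinv_cancel] using this
  · rintro rfl; rfl

lemma mem_dOrbit_self (n : ℕ) (X : Set (ZMod n)) : X ∈ dOrbit n X :=
  ⟨(0, false), image_one n X⟩

lemma exists_of_dOrbit_eq (n : ℕ) {X X' : Set (ZMod n)} (h : dOrbit n X = dOrbit n X') :
    ∃ g, X' = dihApply n g '' X := by
  have hx : X' ∈ dOrbit n X := h ▸ mem_dOrbit_self n X'
  obtain ⟨g, hg⟩ := hx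
  exact ⟨g, hg.symm⟩

lemma dOrbit_image (n : ℕ) (g : ZMod n × Bool) (X : Set (ZMod n)) :
    dOrbit n (dihApply n g '' X) = dOrbit n X := by
  ext Y; constructor
  · rintro ⟨h, rfl⟩
    exact ⟨dmul n h g, by rw [← image_dmul]⟩
  · rintro ⟨h, rfl⟩
    exact ⟨dmul n h (dinv n g), by rw [← image_dmul, image_dinv_cancel]⟩

lemma rot_eq_dih (n : ℕ) (k : ZMod n) : rotApply n k = dihApply n (k, false) := rfl

lemma mem_rStab_iff (n : ℕ) (X : Set (ZMod n)) (k : ZMod n) :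
    k ∈ rStab n X ↔ (k, false) ∈ dStab n X := by
  rw [rStab, dStab, Set.mem_setOf_eq, Set.mem_setOf_eq, rot_eq_dih]

lemma dStab_one (n : ℕ) (X : Set (ZMod n)) : (0, false) ∈ dStab n X := image_one n X

lemma rStab_image (n : ℕ) (g : ZMod n × Bool) (X : Set (ZMod n)) (k : ZMod n) :
    k ∈ rStab n (dihApply n g '' X) ↔ (if g.2 then -k else k) ∈ rStab n X := by
  rw [mem_rStab_iff, mem_rStab_iff]
  show dihApply n (k, false) '' (dihApply n g '' X) = dihApply n g '' X ↔ _
  rw [image_dmul]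
  have key : dmul n (k, false) g = dmul n g ((if g.2 then -k else k), false) := by
    rcases g with ⟨l, _ | _⟩ <;> simp [dmul] <;> ring
  rw [key, ← image_dmul, image_eq_image_iff]
  rfl

end OrbAux

namespace OrbAux

def cmap {n d : ℕ} (hd : d ∣ n) : ZMod n →+* ZMod d := ZMod.castHom hd (ZMod d)

lemma cmap_surj {n d : ℕ} (hd : d ∣ n) (hd0 : d ≠ 0) : Function.Surjective (cmap hd) := by
  haveI : NeZero d := ⟨hd0⟩
  intro y
  exact ⟨(y.val : ZMod n), by rw [cmap, map_natCast, ZMod.natCast_zmod_val]⟩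

lemma cmap_natCast {n d : ℕ} (hd : d ∣ n) (m : ℕ) : cmap hd (m : ZMod n) = (m : ZMod d) :=
  map_natCast _ m

def Ker (n d : ℕ) : Set (ZMod n) := {k | (d : ZMod n) ∣ k}

lemma mem_Ker_iff {n d : ℕ} [NeZero n] (hd : d ∣ n) (k : ZMod n) :
    k ∈ Ker n d ↔ cmap hd k = 0 := by
  constructor
  · rintro ⟨t, rfl⟩
    rw [map_mul, cmap_natCast, ZMod.natCast_self, zero_mul]
  · intro h
    have hk : k = ((k.val : ℕ) : ZMod n) := (ZMod.natCast_zmod_val k).symm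
    rw [hk, cmap_natCast, ZMod.natCast_eq_zero_iff] at h
    obtain ⟨t, ht⟩ := h
    exact ⟨(t : ZMod n), by rw [hk, ht, Nat.cast_mul]⟩

lemma neg_mem_Ker_iff {n d : ℕ} (k : ZMod n) : -k ∈ Ker n d ↔ k ∈ Ker n d := by
  simp [Ker]

lemma Ker_inj {n d d' : ℕ} [NeZero n] (hd : d ∣ n) (hd' : d' ∣ n)
    (h : Ker n d = Ker n d') : d = d' := by
  have h1 : (d : ZMod n) ∈ Ker n d := ⟨1, (mul_one _).symm⟩
  have h2 : (d' : ZMod n) ∈ Ker n d' := ⟨1, (mul_one _).symm⟩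
  rw [h] at h1; rw [← h] at h2
  rw [mem_Ker_iff hd', cmap_natCast, ZMod.natCast_eq_zero_iff] at h1
  rw [mem_Ker_iff hd, cmap_natCast, ZMod.natCast_eq_zero_iff] at h2
  exact Nat.dvd_antisymm h2 h1

lemma rot_comp (n : ℕ) (k l : ZMod n) (X : Set (ZMod n)) :
    rotApply n k '' (rotApply n l '' X) = rotApply n (k + l) '' X := by
  rw [Set.image_image]
  exact Set.image_congr fun x _ => by simp [rotApply]; ring

lemma rStab_zero (n : ℕ) (X : Set (ZMod n)) : (0 : ZMod n) ∈ rStab n X := by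
  show rotApply n 0 '' X = X
  have : rotApply n (0 : ZMod n) = id := funext fun x => by simp [rotApply]
  rw [this, Set.image_id]

lemma rStab_add (n : ℕ) (X : Set (ZMod n)) {k l : ZMod n}
    (hk : k ∈ rStab n X) (hl : l ∈ rStab n X) : k + l ∈ rStab n X := by
  show rotApply n (k + l) '' X = X
  rw [← rot_comp, hl, hk]

lemma rStab_neg (n : ℕ) (X : Set (ZMod n)) {k : ZMod n}
    (hk : k ∈ rStab n X) : -k ∈ rStab n X := by
  show rotApply n (-k) '' X = X
  conv_lhs => rw [← hk]
  rw [rot_comp, neg_add_cancel]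
  exact rStab_zero n X

lemma rStab_nsmul (n : ℕ) (X : Set (ZMod n)) (m : ℕ) {k : ZMod n}
    (hk : k ∈ rStab n X) : ((m : ZMod n) * k) ∈ rStab n X := by
  induction m with
  | zero => simpa using rStab_zero n X
  | succ m ih =>
      have : ((m + 1 : ℕ) : ZMod n) * k = (m : ZMod n) * k + k := by push_cast; ring
      rw [this]
      exact rStab_add n X ih hk

lemma natCast_mem_rStab_dvd (n : ℕ) (hn : 3 ≤ n) (X : Set (ZMod n)) :
    ∃ d : ℕ, d ∣ n ∧ d ≠ 0 ∧ rStab n X = Ker n d := by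
  haveI : NeZero n := ⟨by omega⟩
  have hP : ∃ m : ℕ, 0 < m ∧ (m : ZMod n) ∈ rStab n X :=
    ⟨n, by omega, by rw [ZMod.natCast_self]; exact rStab_zero n X⟩
  classical
  set d := Nat.find hP with hdDef
  obtain ⟨hd0, hdmem⟩ := Nat.find_spec hP
  have key : ∀ m : ℕ, (m : ZMod n) ∈ rStab n X → d ∣ m := by
    intro m hm
    have hr : ((m % d : ℕ) : ZMod n) ∈ rStab n X := by
      have hsplit : ((m % d : ℕ) : ZMod n)
          = (m : ZMod n) + -(((m / d : ℕ) : ZMod n) * (d : ZMod n)) := by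
        have h1 : (m : ZMod n) = ((m / d : ℕ) : ZMod n) * (d : ZMod n) + ((m % d : ℕ) : ZMod n) := by
          conv_lhs => rw [← Nat.div_add_mod m d]
          push_cast; ring
        rw [h1]; ring
      rw [hsplit]
      exact rStab_add n X hm (rStab_neg n X (rStab_nsmul n X (m / d) hdmem))
    by_contra hndvd
    have hrpos : 0 < m % d := Nat.pos_of_ne_zero fun h => hndvd (Nat.dvd_of_mod_eq_zero h)
    have := Nat.find_min hP (Nat.mod_lt m hd0) ⟨hrpos, hr⟩
    exact this
  have hdn : d ∣ n := key n (by rw [ZMod.natCast_self]; exact rStab_zero n X)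
  refine ⟨d, hdn, by omega, ?_⟩
  ext k
  constructor
  · intro hk
    have hk' : ((k.val : ℕ) : ZMod n) ∈ rStab n X := by rw [ZMod.natCast_zmod_val]; exact hk
    obtain ⟨t, ht⟩ := key k.val hk'
    refine ⟨(t : ZMod n), ?_⟩
    rw [← ZMod.natCast_zmod_val k, ht, Nat.cast_mul]
  · rintro ⟨t, rfl⟩
    rw [show (d : ZMod n) * t = (t.val : ZMod n) * (d : ZMod n) by
      rw [ZMod.natCast_zmod_val]; ring]
    exact rStab_nsmul n X t.val hdmem

end OrbAux

namespace OrbAux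

lemma cmap_dih {n d : ℕ} (hd : d ∣ n) (g : ZMod n × Bool) (x : ZMod n) :
    cmap hd (dihApply n g x) = dihApply d (cmap hd g.1, g.2) (cmap hd x) := by
  rcases g with ⟨k, _ | _⟩ <;> simp [dihApply, map_add, map_sub]

lemma cmap_dinv {n d : ℕ} (hd : d ∣ n) (g : ZMod n × Bool) :
    (cmap hd (dinv n g).1, (dinv n g).2) = dinv d (cmap hd g.1, g.2) := by
  rcases g with ⟨k, _ | _⟩ <;> simp [dinv]

lemma dih_preimage {n d : ℕ} (hd : d ∣ n) (hd0 : d ≠ 0) (g : ZMod n × Bool)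
    (Y : Set (ZMod d)) :
    dihApply n g '' (cmap hd ⁻¹' Y) = cmap hd ⁻¹' (dihApply d (cmap hd g.1, g.2) '' Y) := by
  ext x
  simp only [Set.mem_image, Set.mem_preimage]
  constructor
  · rintro ⟨w, hw, rfl⟩
    exact ⟨cmap hd w, hw, (cmap_dih hd g w).symm⟩
  · rintro ⟨y, hy, hxy⟩
    refine ⟨dihApply n (dinv n g) x, ?_, ?_⟩
    · rw [cmap_dih hd (dinv n g) x, cmap_dinv hd g, ← hxy, ← dihApply_dmul, dinv_dmul,
        dihApply_one]
      exact hy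
    · rw [← dihApply_dmul, dmul_dinv, dihApply_one]

lemma dStab_preimage {n d : ℕ} (hd : d ∣ n) (hd0 : d ≠ 0) (Y : Set (ZMod d))
    (g : ZMod n × Bool) :
    g ∈ dStab n (cmap hd ⁻¹' Y) ↔ (cmap hd g.1, g.2) ∈ dStab d Y := by
  show dihApply n g '' (cmap hd ⁻¹' Y) = cmap hd ⁻¹' Y ↔ dihApply d (cmap hd g.1, g.2) '' Y = Y
  rw [dih_preimage hd hd0]
  exact (Function.Surjective.preimage_injective (cmap_surj hd hd0)).eq_iff

lemma F_dOrbit {n d : ℕ} (hd : d ∣ n) (hd0 : d ≠ 0) (Y : Set (ZMod d)) :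
    (fun Z => cmap hd ⁻¹' Z) '' (dOrbit d Y) = dOrbit n (cmap hd ⁻¹' Y) := by
  ext W
  simp only [Set.mem_image]
  constructor
  · rintro ⟨Z, ⟨h, rfl⟩, rfl⟩
    obtain ⟨k, hk⟩ := cmap_surj hd hd0 h.1
    refine ⟨(k, h.2), ?_⟩
    rw [dih_preimage hd hd0]
    simp only [hk]
  · rintro ⟨g, rfl⟩
    exact ⟨dihApply d (cmap hd g.1, g.2) '' Y, ⟨_, rfl⟩, (dih_preimage hd hd0 g Y).symm⟩

end OrbAux

namespace OrbAux

lemma adj_iff (m : ℕ) (a b : ZMod m) :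
    (cycleGraph m).Adj a b ↔ a ≠ b ∧ (b = a + 1 ∨ a = b + 1) := by
  rw [cycleGraph, SimpleGraph.fromRel_adj]

lemma one_ne_zero' (m : ℕ) (hm : 3 ≤ m) : (1 : ZMod m) ≠ 0 := by
  intro h
  have h2 : ((1 : ℕ) : ZMod m) = 0 := by exact_mod_cast h
  rw [ZMod.natCast_eq_zero_iff] at h2
  have := Nat.le_of_dvd one_pos h2
  omega

lemma isMIS_iff (m : ℕ) (X : Set (ZMod m)) :
    IsMIS m X ↔ X.Pairwise (fun a b => ¬ (cycleGraph m).Adj a b) ∧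
      ∀ v ∉ X, ∃ u ∈ X, (cycleGraph m).Adj u v := by
  constructor
  · rintro ⟨hind, hmax⟩
    refine ⟨hind, fun v hv => ?_⟩
    by_contra hc
    push_neg at hc
    have h1 : (X ∪ {v}).Pairwise (fun a b => ¬ (cycleGraph m).Adj a b) := by
      rintro a (ha | ha) b (hb | hb) hab
      · exact hind ha hb hab
      · rw [Set.mem_singleton_iff] at hb; subst hb
        exact hc a ha
      · rw [Set.mem_singleton_iff] at ha; subst ha
        exact fun hadj => hc b hb hadj.symm
      · rw [Set.mem_singleton_iff] at ha hb; subst ha; subst hb; exact absurd rfl hab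
    have h2 := hmax _ h1 Set.subset_union_left
    exact hv (h2 ▸ Set.mem_union_right X rfl)
  · rintro ⟨hind, hdom⟩
    refine ⟨hind, fun Y hY hXY => ?_⟩
    refine Set.Subset.antisymm hXY fun v hv => ?_
    by_contra hvX
    obtain ⟨u, hu, hadj⟩ := hdom v hvX
    exact hY (hXY hu) hv (fun h => hvX (h ▸ hu)) hadj

lemma add_one_ne {m : ℕ} (h1 : (1 : ZMod m) ≠ 0) (x : ZMod m) : x + 1 ≠ x :=
  fun he => h1 (by linear_combination he)

lemma ne_add_one {m : ℕ} (h1 : (1 : ZMod m) ≠ 0) (x : ZMod m) : x ≠ x + 1 :=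
  fun he => h1 (by linear_combination -he)

lemma sub_one_ne {m : ℕ} (h1 : (1 : ZMod m) ≠ 0) (x : ZMod m) : x - 1 ≠ x :=
  fun he => h1 (by linear_combination -he)

lemma isMIS_preimage {n d : ℕ} (hd : d ∣ n) (hn : 3 ≤ n) (hd3 : 3 ≤ d) (Y : Set (ZMod d)) :
    IsMIS n (cmap hd ⁻¹' Y) ↔ IsMIS d Y := by
  have hd0 : d ≠ 0 := by omega
  have h1n : (1 : ZMod n) ≠ 0 := one_ne_zero' n hn
  have h1d : (1 : ZMod d) ≠ 0 := one_ne_zero' d hd3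
  have hsurj := cmap_surj hd hd0
  rw [isMIS_iff, isMIS_iff]
  constructor
  · rintro ⟨hind, hdom⟩
    constructor
    · intro a ha b hb hab hadj
      rw [adj_iff] at hadj
      obtain ⟨x, rfl⟩ := hsurj a
      rcases hadj.2 with h | h
      · -- b = cmap x + 1
        have hx1 : cmap hd (x + 1) = b := by rw [map_add, map_one, h]
        have hmem : x + 1 ∈ cmap hd ⁻¹' Y := by rw [Set.mem_preimage, hx1]; exact hb
        refine hind ha hmem (ne_add_one h1n x) ?_
        rw [adj_iff]
        exact ⟨ne_add_one h1n x, Or.inl rfl⟩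
      · -- cmap x = b + 1
        have hx1 : cmap hd (x - 1) = b := by rw [map_sub, map_one, h]; ring
        have hmem : x - 1 ∈ cmap hd ⁻¹' Y := by rw [Set.mem_preimage, hx1]; exact hb
        refine hind ha hmem (sub_one_ne h1n x).symm ?_
        rw [adj_iff]
        exact ⟨(sub_one_ne h1n x).symm, Or.inr (by ring)⟩
    · intro a ha
      obtain ⟨x, rfl⟩ := hsurj a
      obtain ⟨u, hu, hadj⟩ := hdom x ha
      rw [adj_iff] at hadj
      refine ⟨cmap hd u, hu, ?_⟩
      rw [adj_iff]
      rcases hadj.2 with h | h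
      · -- x = u + 1
        refine ⟨?_, Or.inl (by rw [h, map_add, map_one])⟩
        rw [h, map_add, map_one]
        exact ne_add_one h1d (cmap hd u)
      · -- u = x + 1
        refine ⟨?_, Or.inr (by rw [h, map_add, map_one])⟩
        rw [h, map_add, map_one]
        exact add_one_ne h1d (cmap hd x)
  · rintro ⟨hind, hdom⟩
    constructor
    · intro x hx y hy hxy hadj
      rw [adj_iff] at hadj
      have hker : cmap hd x ≠ cmap hd y := by
        rcases hadj.2 with h | h
        · rw [h, map_add, map_one]
          exact ne_add_one h1d (cmap hd x)
        · rw [h, map_add, map_one]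
          exact (add_one_ne h1d (cmap hd y)).symm.symm
      refine hind hx hy hker ?_
      rw [adj_iff]
      refine ⟨hker, ?_⟩
      rcases hadj.2 with h | h
      · exact Or.inl (by rw [h, map_add, map_one])
      · exact Or.inr (by rw [h, map_add, map_one])
    · intro v hv
      obtain ⟨b, hb, hadj⟩ := hdom (cmap hd v) hv
      rw [adj_iff] at hadj
      rcases hadj.2 with h | h
      · -- cmap v = b + 1, take u = v - 1
        refine ⟨v - 1, ?_, ?_⟩
        · rw [Set.mem_preimage, map_sub, map_one]
          have hb' : cmap hd v - 1 = b := by rw [h]; ring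
          rwa [hb']
        · rw [adj_iff]
          exact ⟨sub_one_ne h1n v, Or.inl (by ring)⟩
      · -- b = cmap v + 1, take u = v + 1
        refine ⟨v + 1, ?_, ?_⟩
        · rw [Set.mem_preimage, map_add, map_one, ← h]; exact hb
        · rw [adj_iff]
          exact ⟨add_one_ne h1n v, Or.inr rfl⟩

lemma eq_preimage_image {n d : ℕ} [NeZero n] (hd : d ∣ n) (X : Set (ZMod n))
    (hK : Ker n d ⊆ rStab n X) : X = cmap hd ⁻¹' (cmap hd '' X) := by
  refine Set.Subset.antisymm (Set.subset_preimage_image _ X) fun x hx => ?_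
  rw [Set.mem_preimage] at hx
  obtain ⟨y, hy, hxy⟩ := hx
  have hker : x - y ∈ Ker n d := by
    rw [mem_Ker_iff hd, map_sub, hxy, sub_self]
  have hst := hK hker
  have : rotApply n (x - y) '' X = X := hst
  rw [← this]
  exact ⟨y, hy, by simp [rotApply]⟩
end OrbAux

namespace OrbAux

lemma ncard_biUnion {α β : Type*} [Finite β] (s : Finset α) (f : α → Set β)
    (h : ∀ a ∈ s, ∀ b ∈ s, a ≠ b → Disjoint (f a) (f b)) :
    (⋃ a ∈ s, f a).ncard = ∑ a ∈ s, (f a).ncard := by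
  classical
  induction s using Finset.induction_on with
  | empty => simp
  | insert _ _ ha ih =>
      rename_i a s
      rw [Finset.set_biUnion_insert, Finset.sum_insert ha,
        Set.ncard_union_eq ?_ (Set.toFinite _) (Set.toFinite _),
        ih fun x hx y hy hxy => h x (Finset.mem_insert_of_mem hx) y
          (Finset.mem_insert_of_mem hy) hxy]
      · rw [Set.disjoint_iUnion_right]
        intro i
        rw [Set.disjoint_iUnion_right]
        intro hi
        exact h a (Finset.mem_insert_self a s) i (Finset.mem_insert_of_mem hi)
          (fun he => ha (he ▸ hi))

def Sd (n d : ℕ) : Set (Set (Set (ZMod n))) :=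
  {O | ∃ X, IsMIS n X ∧ O = dOrbit n X ∧ dStab n X ⊆ {g | g.2 = false} ∧ rStab n X = Ker n d}

lemma dStab_eq_singleton_iff {d : ℕ} [NeZero d] (Y : Set (ZMod d)) :
    (dStab d Y).ncard = 1 ↔ dStab d Y = {(0, false)} := by
  constructor
  · intro h
    obtain ⟨a, ha⟩ := Set.ncard_eq_one.mp h
    have h0 : (0, false) ∈ dStab d Y := dStab_one d Y
    rw [ha] at h0 ⊢
    rw [Set.mem_singleton_iff] at h0
    rw [h0]
  · intro h; rw [h, Set.ncard_singleton]

lemma neg_eq_self_of_le_two {d : ℕ} (hd1 : d = 1 ∨ d = 2) (y : ZMod d) : -y = y := by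
  rcases hd1 with rfl | rfl
  · exact Subsingleton.elim _ _
  · revert y; decide

lemma Sd_card_eq (n : ℕ) (hn : 3 ≤ n) (d : ℕ) (hdn : d ∣ n) (hd0 : d ≠ 0) :
    (Sd n d).ncard = orbd 1 d := by
  haveI : NeZero n := ⟨by omega⟩
  haveI : NeZero d := ⟨hd0⟩
  by_cases hd3 : 3 ≤ d
  · -- main case: bijection with free orbits of C_d
    have key : Sd n d = (fun O' => (fun Z => cmap hdn ⁻¹' Z) '' O') ''
        {O' | ∃ Y, IsMIS d Y ∧ O' = dOrbit d Y ∧ (dStab d Y).ncard = 1} := by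
      ext O
      constructor
      · rintro ⟨X, hX, rfl, hrot, hrs⟩
        have hK : Ker n d ⊆ rStab n X := hrs ▸ subset_rfl
        have hXeq : X = cmap hdn ⁻¹' (cmap hdn '' X) := eq_preimage_image hdn X hK
        set Y := cmap hdn '' X with hY
        refine ⟨dOrbit d Y, ⟨Y, ?_, rfl, ?_⟩, ?_⟩
        · rw [← isMIS_preimage hdn hn hd3, ← hXeq]; exact hX
        · rw [dStab_eq_singleton_iff]
          refine Set.Subset.antisymm ?_ ?_
          · rintro ⟨a, ε⟩ hg
            obtain ⟨k, rfl⟩ := cmap_surj hdn hd0 a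
            have hmem : (k, ε) ∈ dStab n X := by
              rw [hXeq]
              exact (dStab_preimage hdn hd0 Y (k, ε)).mpr hg
            have hfalse : ε = false := hrot hmem
            subst hfalse
            have hk : k ∈ rStab n X := (mem_rStab_iff n X k).mpr hmem
            rw [hrs, mem_Ker_iff hdn] at hk
            rw [Set.mem_singleton_iff, Prod.ext_iff]
            exact ⟨hk, rfl⟩
          · rintro g hg
            rw [Set.mem_singleton_iff] at hg
            rw [hg]
            exact dStab_one d Y
        · show (fun Z => cmap hdn ⁻¹' Z) '' dOrbit d Y = dOrbit n X
          rw [F_dOrbit hdn hd0, ← hXeq]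
      · rintro ⟨O', ⟨Y, hY, rfl, hstab⟩, rfl⟩
        show (fun Z => cmap hdn ⁻¹' Z) '' dOrbit d Y ∈ Sd n d
        rw [F_dOrbit hdn hd0]
        rw [dStab_eq_singleton_iff] at hstab
        refine ⟨cmap hdn ⁻¹' Y, (isMIS_preimage hdn hn hd3 Y).mpr hY, rfl, ?_, ?_⟩
        · rintro ⟨k, ε⟩ hg
          have := (dStab_preimage hdn hd0 Y (k, ε)).mp hg
          rw [hstab, Set.mem_singleton_iff, Prod.ext_iff] at this
          exact this.2
        · ext k
          rw [mem_rStab_iff, mem_Ker_iff hdn,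
            dStab_preimage hdn hd0 Y (k, false), hstab, Set.mem_singleton_iff, Prod.ext_iff]
          simp
    rw [key]
    have hinj : Function.Injective (fun O' : Set (Set (ZMod d)) => (fun Z => cmap hdn ⁻¹' Z) '' O') :=
      Set.image_injective.mpr (Function.Surjective.preimage_injective (cmap_surj hdn hd0))
    exact (Set.ncard_image_of_injective _ hinj).trans rfl
  · -- degenerate case d = 1 or d = 2
    have hd12 : d = 1 ∨ d = 2 := by omega
    have h2 : ∀ X : Set (ZMod d), ((0 : ZMod d), true) ∈ dStab d X := by
      intro X
      show dihApply d (0, true) '' X = X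
      have hfun : dihApply d ((0 : ZMod d), true) = id := funext fun x => by
        show (0 : ZMod d) - x = x
        rw [zero_sub, neg_eq_self_of_le_two hd12]
      rw [hfun, Set.image_id]
    have hset : {O : Set (Set (ZMod d)) |
        ∃ X, IsMIS d X ∧ O = dOrbit d X ∧ (dStab d X).ncard = 1} = ∅ := by
      ext O
      simp only [Set.mem_setOf_eq, Set.mem_empty_iff_false, iff_false]
      rintro ⟨X, hX, rfl, hst⟩
      have hlt : 1 < (dStab d X).ncard := by
        rw [Set.one_lt_ncard (Set.toFinite _)]
        exact ⟨((0 : ZMod d), false), dStab_one d X, ((0 : ZMod d), true), h2 X, by simp⟩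
      omega
    have horbd : orbd 1 d = 0 := by
      show Set.ncard _ = 0
      rw [hset, Set.ncard_empty]
    have hSd : Sd n d = ∅ := by
      ext O
      simp only [Sd, Set.mem_setOf_eq, Set.mem_empty_iff_false, iff_false]
      rintro ⟨X, hX, rfl, hrot, hrs⟩
      have hK : Ker n d ⊆ rStab n X := hrs ▸ subset_rfl
      have hXeq := eq_preimage_image hdn X hK
      have hmem : ((0 : ZMod n), true) ∈ dStab n X := by
        rw [hXeq]
        refine (dStab_preimage hdn hd0 _ _).mpr ?_
        show ((cmap hdn (0 : ZMod n)), true) ∈ dStab d (cmap hdn '' X)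
        rw [map_zero]
        exact h2 _
      have := hrot hmem
      simp at this
    rw [hSd, Set.ncard_empty, horbd]

end OrbAux

open OrbAux

/-- The number of orbits of MISs of C_n whose elements have stabilizer contained in the
rotation subgroup ⟨σ⟩ equals Σ_{d | n} orb_1(d). -/
theorem orbits_with_rotational_stabilizer (n : ℕ) (hn : 3 ≤ n) :
    {O | ∃ X, IsMIS n X ∧ O = dOrbit n X ∧ dStab n X ⊆ {g | g.2 = false}}.ncard =
      ∑ d ∈ n.divisors, orbd 1 d := by
  classical
  haveI : NeZero n := ⟨by omega⟩
  have hcover : {O | ∃ X, IsMIS n X ∧ O = dOrbit n X ∧ dStab n X ⊆ {g | g.2 = false}}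
      = ⋃ d ∈ n.divisors, Sd n d := by
    ext O
    simp only [Set.mem_setOf_eq, Set.mem_iUnion]
    constructor
    · rintro ⟨X, hX, rfl, hrot⟩
      obtain ⟨d, hdn, hd0, hrs⟩ := natCast_mem_rStab_dvd n hn X
      exact ⟨d, Nat.mem_divisors.mpr ⟨hdn, by omega⟩, X, hX, rfl, hrot, hrs⟩
    · rintro ⟨d, hd, X, hX, rfl, hrot, _⟩
      exact ⟨X, hX, rfl, hrot⟩
  have hdisj : ∀ a ∈ n.divisors, ∀ b ∈ n.divisors, a ≠ b → Disjoint (Sd n a) (Sd n b) := by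
    intro a ha b hb hab
    rw [Set.disjoint_left]
    rintro O ⟨X, hX, rfl, hrotX, hrsX⟩ ⟨X', hX', hO', hrotX', hrsX'⟩
    obtain ⟨g, rfl⟩ := exists_of_dOrbit_eq n hO'
    apply hab
    refine Ker_inj (Nat.mem_divisors.mp ha).1 (Nat.mem_divisors.mp hb).1 ?_
    ext k
    rw [← hrsX, ← hrsX', rStab_image, hrsX]
    by_cases hg : g.2 <;> simp [hg, neg_mem_Ker_iff]
  rw [hcover, ncard_biUnion _ _ hdisj]
  exact Finset.sum_congr rfl fun d hd =>
    Sd_card_eq n hn d (Nat.mem_divisors.mp hd).1 (Nat.pos_of_mem_divisors hd).ne'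
end

section
/- The number of maximal independent sets of C_n up to rotation and reflection (i.e., the number of orbits under the dihedral group D_{2n}) equals the number of cyclic compositions of n with all parts in {2,3}, where a cyclic composition and its reversal are identified. -/
namespace MISaux

def psum (l : List ℕ) (i : ℕ) : ℕ := (l.take i).sum

def bset (n : ℕ) (x : ZMod n) (l : List ℕ) : Set (ZMod n) :=
  {y | ∃ i, i < l.length ∧ y = x + ((psum l i : ℕ) : ZMod n)}

lemma psum_zero (l : List ℕ) : psum l 0 = 0 := rfl

lemma psum_succ (l : List ℕ) (i : ℕ) (h : i < l.length) :
    psum l (i+1) = psum l i + l.get ⟨i, h⟩ := by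
  simpa [psum] using List.sum_take_succ l i h

lemma psum_length (l : List ℕ) : psum l l.length = l.sum := by simp [psum]

lemma psum_mono (l : List ℕ) {i j : ℕ} (h : i ≤ j) : psum l i ≤ psum l j :=
  List.Sublist.sum_le_sum (List.take_sublist_take_left (l := l) h) (fun a _ => Nat.zero_le a)

lemma two_le_of_parts23 {l : List ℕ} (hl : parts23 l) {a : ℕ} (ha : a ∈ l) : 2 ≤ a := by
  rcases hl a ha with h | h <;> omega

lemma psum_add_two {l : List ℕ} (hl : parts23 l) {i j : ℕ} (hij : i < j)
    (hj : j ≤ l.length) : psum l i + 2 ≤ psum l j := by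
  have hi : i < l.length := lt_of_lt_of_le hij hj
  have h1 : psum l (i+1) = psum l i + l.get ⟨i, hi⟩ := psum_succ l i hi
  have h2 : 2 ≤ l.get ⟨i, hi⟩ := two_le_of_parts23 hl (l.get_mem _)
  have h3 : psum l (i+1) ≤ psum l j := psum_mono l hij
  omega

lemma psum_lt_sum {l : List ℕ} (hl : parts23 l) {i : ℕ} (hi : i < l.length) :
    psum l i + 2 ≤ l.sum := by
  have := psum_add_two hl hi le_rfl
  rwa [psum_length] at this

lemma mem_bset {n : ℕ} {x : ZMod n} {l : List ℕ} {i : ℕ} (hi : i < l.length) :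
    x + ((psum l i : ℕ) : ZMod n) ∈ bset n x l := ⟨i, hi, rfl⟩

lemma base_mem_bset {n : ℕ} {x : ZMod n} {l : List ℕ} (h : l ≠ []) : x ∈ bset n x l := by
  have : 0 < l.length := List.length_pos_iff.2 h
  simpa [psum] using mem_bset (x := x) this

lemma natCast_inj_of_lt {n a b : ℕ} (ha : a < n) (hb : b < n)
    (h : (a : ZMod n) = (b : ZMod n)) : a = b := by
  have := congrArg ZMod.val h
  rwa [ZMod.val_cast_of_lt ha, ZMod.val_cast_of_lt hb] at this

lemma psum_append (u v : List ℕ) (i : ℕ) :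
    psum (u ++ v) i = (u.take i).sum + (v.take (i - u.length)).sum := by
  simp [psum, List.take_append]

lemma bset_append (n : ℕ) (x : ZMod n) (u v : List ℕ) :
    bset n x (u ++ v) = bset n x u ∪ bset n (x + (u.sum : ZMod n)) v := by
  ext y
  constructor
  · rintro ⟨i, hi, rfl⟩
    rw [List.length_append] at hi
    by_cases h : i < u.length
    · left
      refine ⟨i, h, ?_⟩
      rw [psum_append]
      have : i - u.length = 0 := by omega
      simp [this, psum]
    · right
      refine ⟨i - u.length, by omega, ?_⟩
      rw [psum_append, List.take_of_length_le (by omega), Nat.cast_add, ← add_assoc]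
      rfl
  · rintro (⟨i, hi, rfl⟩ | ⟨i, hi, rfl⟩)
    · refine ⟨i, by simp; omega, ?_⟩
      rw [psum_append]
      have : i - u.length = 0 := by omega
      simp [this, psum]
    · refine ⟨u.length + i, by simp; omega, ?_⟩
      rw [psum_append, List.take_of_length_le (by omega)]
      have : u.length + i - u.length = i := by omega
      rw [this, Nat.cast_add, ← add_assoc]
      rfl

lemma bset_swap {n : ℕ} (x : ZMod n) (u v : List ℕ) (h : u.sum + v.sum = n) :
    bset n x (u ++ v) = bset n (x + (u.sum : ZMod n)) (v ++ u) := by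
  rw [bset_append, bset_append, Set.union_comm]
  congr 2
  have : ((u.sum : ZMod n) + (v.sum : ZMod n)) = ((n : ℕ) : ZMod n) := by
    rw [← Nat.cast_add, h]
  rw [add_assoc, this, ZMod.natCast_self, add_zero]

lemma bset_rotate {n : ℕ} (x : ZMod n) (l : List ℕ) (hs : l.sum = n) {i : ℕ}
    (hi : i ≤ l.length) :
    bset n x l = bset n (x + ((psum l i : ℕ) : ZMod n)) (l.rotate i) := by
  conv_lhs => rw [← List.take_append_drop i l]
  rw [bset_swap x _ _ (by rw [← List.sum_append, List.take_append_drop]; exact hs),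
    List.rotate_eq_drop_append_take hi]
  rfl

lemma bset_translate {n : ℕ} (x c : ZMod n) (l : List ℕ) :
    (fun z => z + c) '' bset n x l = bset n (x + c) l := by
  ext y
  simp only [bset, Set.mem_image, Set.mem_setOf_eq]
  constructor
  · rintro ⟨z, ⟨i, hi, rfl⟩, rfl⟩; exact ⟨i, hi, by ring⟩
  · rintro ⟨i, hi, rfl⟩; exact ⟨x + ((psum l i : ℕ) : ZMod n), ⟨i, hi, rfl⟩, by ring⟩

lemma psum_reverse (l : List ℕ) (j : ℕ) :
    psum l.reverse j = l.sum - psum l (l.length - j) := by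
  have h1 : l.reverse.take j = (l.drop (l.length - j)).reverse := by
    rw [List.take_reverse]
  rw [psum, h1, List.sum_reverse, psum]
  have h2 := List.sum_take_add_sum_drop l (l.length - j)
  omega

lemma psum_le_sum (l : List ℕ) (i : ℕ) : psum l i ≤ l.sum := by
  rcases le_or_gt i l.length with h | h
  · rw [← psum_length]; exact psum_mono l h
  · rw [psum, List.take_of_length_le (le_of_lt h)]

lemma bset_reflect {n : ℕ} (x c : ZMod n) (l : List ℕ) (hs : l.sum = n) :
    (fun z => c - z) '' bset n x l = bset n (c - x) l.reverse := by
  have hcast : ∀ i : ℕ, ((psum l.reverse i : ℕ) : ZMod n)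
      = - ((psum l (l.length - i) : ℕ) : ZMod n) := by
    intro i
    rw [psum_reverse l i, eq_neg_iff_add_eq_zero, ← Nat.cast_add,
      Nat.sub_add_cancel (psum_le_sum l _), hs, ZMod.natCast_self]
  ext y
  simp only [Set.mem_image, bset, Set.mem_setOf_eq, List.length_reverse]
  constructor
  · rintro ⟨z, ⟨i, hi, rfl⟩, rfl⟩
    by_cases h0 : i = 0
    · refine ⟨0, by omega, ?_⟩
      simp [h0, psum]
    · refine ⟨l.length - i, by omega, ?_⟩
      rw [hcast]
      have : l.length - (l.length - i) = i := by omega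
      rw [this]
      ring
  · rintro ⟨j, hj, rfl⟩
    by_cases h0 : j = 0
    · refine ⟨x, ⟨0, by omega, ?_⟩, ?_⟩ <;> simp [h0, psum]
    · refine ⟨x + ((psum l (l.length - j) : ℕ) : ZMod n), ⟨l.length - j, by omega, rfl⟩, ?_⟩
      rw [hcast]
      ring




lemma parts23_rotate {l : List ℕ} (hl : parts23 l) (k : ℕ) : parts23 (l.rotate k) :=
  fun a ha => hl a ((List.mem_rotate).1 ha)

lemma sum_rotate (l : List ℕ) (k : ℕ) : (l.rotate k).sum = l.sum :=
  (List.rotate_perm l k).sum_eq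

lemma parts23_reverse {l : List ℕ} (hl : parts23 l) : parts23 l.reverse :=
  fun a ha => hl a (List.mem_reverse.1 ha)

lemma psum_lt_n {n : ℕ} {l : List ℕ} (hl : parts23 l) (hs : l.sum = n) {i : ℕ}
    (hi : i < l.length) : psum l i < n := by
  have := psum_lt_sum hl hi; omega

lemma bset_corr {n : ℕ} {x : ZMod n} {u v : List ℕ}
    (hu : parts23 u) (hv : parts23 v) (hus : u.sum = n) (hvs : v.sum = n)
    (h : bset n x u = bset n x v) : ∀ i < u.length, ∃ j < v.length, psum v j = psum u i := by
  intro i hi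
  have hm : x + ((psum u i : ℕ) : ZMod n) ∈ bset n x v := h ▸ mem_bset hi
  obtain ⟨j, hj, hij⟩ := hm
  refine ⟨j, hj, ?_⟩
  exact natCast_inj_of_lt (psum_lt_n hv hvs hj) (psum_lt_n hu hus hi)
    (add_left_cancel hij).symm

lemma bset_same_base {n : ℕ} {x : ZMod n} {u v : List ℕ}
    (hu : parts23 u) (hv : parts23 v) (hus : u.sum = n) (hvs : v.sum = n)
    (h : bset n x u = bset n x v) : u = v := by
  have cu := bset_corr hu hv hus hvs h
  have cv := bset_corr hv hu hvs hus h.symm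
  have S : ∀ i, i ≤ u.length → i ≤ v.length → psum u i = psum v i := by
    intro i
    induction i with
    | zero => intro _ _; rfl
    | succ i ih =>
      intro hiu hiv
      have hpe := ih (by omega) (by omega)
      have hu2 : psum u i + 2 ≤ psum u (i+1) := psum_add_two hu (Nat.lt_succ_self i) hiu
      have hv2 : psum v i + 2 ≤ psum v (i+1) := psum_add_two hv (Nat.lt_succ_self i) hiv
      rcases lt_or_eq_of_le hiu with hiu2 | hiu2
      · obtain ⟨j, hj, hje⟩ := cu (i+1) hiu2
        have hjge : i + 1 ≤ j := by
          by_contra hc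
          have : psum v j ≤ psum v i := psum_mono v (by omega)
          omega
        have h1 : psum v (i+1) ≤ psum u (i+1) := by
          have := psum_mono v hjge
          omega
        rcases lt_or_eq_of_le hiv with hiv2 | hiv2
        · obtain ⟨j', hj', hje'⟩ := cv (i+1) hiv2
          have hjge' : i + 1 ≤ j' := by
            by_contra hc
            have : psum u j' ≤ psum u i := psum_mono u (by omega)
            omega
          have h2 : psum u (i+1) ≤ psum v (i+1) := by
            have := psum_mono u hjge'
            omega
          omega
        · have : psum v (i+1) = n := by rw [hiv2, psum_length, hvs]
          have : psum u (i+1) < n := psum_lt_n hu hus hiu2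
          omega
      · have h1 : psum u (i+1) = n := by rw [hiu2, psum_length, hus]
        rcases lt_or_eq_of_le hiv with hiv2 | hiv2
        · obtain ⟨j', hj', hje'⟩ := cv (i+1) hiv2
          have hjge' : i + 1 ≤ j' := by
            by_contra hc
            have : psum u j' ≤ psum u i := psum_mono u (by omega)
            have := psum_lt_n hv hvs hiv2
            omega
          have : psum u j' < n := psum_lt_n hu hus (by omega)
          have := psum_lt_n hv hvs hiv2
          omega
        · rw [h1, hiv2, psum_length, hvs]
  have hlen : u.length = v.length := by
    rcases Nat.lt_trichotomy u.length v.length with hc | hc | hc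
    · exfalso
      have h1 := S u.length le_rfl (le_of_lt hc)
      rw [psum_length, hus] at h1
      have := psum_lt_n hv hvs hc
      omega
    · exact hc
    · exfalso
      have h1 := S v.length (le_of_lt hc) le_rfl
      rw [psum_length, hvs] at h1
      have := psum_lt_n hu hus hc
      omega
  refine List.ext_get hlen ?_
  intro i h1 h2
  have e1 := psum_succ u i h1
  have e2 := psum_succ v i h2
  have e3 := S i (by omega) (by omega)
  have e4 := S (i+1) (by omega) (by omega)
  omega

lemma bset_rigid {n : ℕ} (hn : 3 ≤ n) {x x' : ZMod n} {u v : List ℕ}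
    (hu : parts23 u) (hus : u.sum = n) (hv : parts23 v) (hvs : v.sum = n)
    (h : bset n x u = bset n x' v) : ∃ k, v = u.rotate k := by
  have hvne : v ≠ [] := by
    intro e; rw [e] at hvs; simp at hvs; omega
  have hx' : x' ∈ bset n x u := by rw [h]; exact base_mem_bset hvne
  obtain ⟨i, hi, hx'e⟩ := hx'
  refine ⟨i, ?_⟩
  have hrot := bset_rotate x u hus (le_of_lt hi)
  rw [hrot, hx'e] at h
  exact (bset_same_base (parts23_rotate hu i) hv
    (by rw [sum_rotate]; exact hus) hvs h).symm




lemma adj_iff {n : ℕ} (a b : ZMod n) :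
    (cycleGraph n).Adj a b ↔ a ≠ b ∧ (b = a + 1 ∨ a = b + 1) :=
  SimpleGraph.fromRel_adj _ a b

lemma psum_cons (a : ℕ) (u : List ℕ) (j : ℕ) : psum (a :: u) (j+1) = a + psum u j := by
  simp [psum]

lemma exists_between (l : List ℕ) (hpos : ∀ a ∈ l, 0 < a) (t : ℕ) (ht : t < l.sum) :
    ∃ i, i < l.length ∧ psum l i ≤ t ∧ t < psum l (i+1) := by
  induction l generalizing t with
  | nil => simp at ht
  | cons a u ih =>
    by_cases h : t < a
    · exact ⟨0, by simp, by simp [psum], by simpa [psum_cons, psum] using h⟩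
    · have ht' : t - a < u.sum := by
        rw [List.sum_cons] at ht; omega
      obtain ⟨i, hi, h1, h2⟩ := ih (fun b hb => hpos b (List.mem_cons_of_mem a hb)) (t - a) ht'
      exact ⟨i + 1, by simpa using hi, by rw [psum_cons]; omega, by rw [psum_cons]; omega⟩

lemma ne_of_cast_ne {n a b : ℕ} (ha : a < n) (hb : b < n) (hne : a ≠ b) :
    ((a : ℕ) : ZMod n) ≠ (b : ZMod n) := fun h => hne (natCast_inj_of_lt ha hb h)

lemma isMIS_bset {n : ℕ} (hn : 3 ≤ n) {l : List ℕ} (hl : parts23 l) (hs : l.sum = n)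
    (x : ZMod n) : IsMIS n (bset n x l) := by
  haveI : NeZero n := ⟨by omega⟩
  have hlne : l ≠ [] := by intro e; rw [e] at hs; simp at hs; omega
  constructor
  · rintro a ⟨i, hi, rfl⟩ b ⟨j, hj, rfl⟩ hne hadj
    rw [adj_iff] at hadj
    obtain ⟨-, hor⟩ := hadj
    have hij : i ≠ j := by rintro rfl; exact hne rfl
    have hin := psum_lt_sum hl hi
    have hjn := psum_lt_sum hl hj
    have hgap : psum l i + 2 ≤ psum l j ∨ psum l j + 2 ≤ psum l i := by
      rcases hij.lt_or_gt with h | h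
      · exact Or.inl (psum_add_two hl h (le_of_lt hj))
      · exact Or.inr (psum_add_two hl h (le_of_lt hi))
    rcases hor with h | h
    · have : ((psum l j : ℕ) : ZMod n) = ((psum l i + 1 : ℕ) : ZMod n) := by
        push_cast
        rw [add_assoc] at h
        exact add_left_cancel h
      have := natCast_inj_of_lt (by omega) (by omega) this
      omega
    · have : ((psum l i : ℕ) : ZMod n) = ((psum l j + 1 : ℕ) : ZMod n) := by
        push_cast
        rw [add_assoc] at h
        exact add_left_cancel h
      have := natCast_inj_of_lt (by omega) (by omega) this
      omega
  · intro Y hY hXY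
    refine Set.Subset.antisymm hXY ?_
    intro y hy
    set t := (y - x).val with ht
    have htn : t < n := ZMod.val_lt _
    have hyx : y = x + ((t : ℕ) : ZMod n) := by
      rw [ht, ZMod.natCast_rightInverse (y - x)]
      ring
    obtain ⟨i, hil, h1, h2⟩ := exists_between l
      (fun a ha => by have := two_le_of_parts23 hl ha; omega) t (by omega)
    have hin := psum_lt_sum hl hil
    have hstep : psum l (i+1) ≤ psum l i + 3 := by
      rw [psum_succ l i hil]
      rcases hl _ (l.get_mem ⟨i, hil⟩) with h | h <;> omega
    have hpin : psum l (i+1) ≤ n := by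
      rw [← hs, ← psum_length]; exact psum_mono l hil
    rcases (by omega : t = psum l i ∨ t = psum l i + 1 ∨ t + 1 = psum l (i+1)) with he | he | he
    · exact ⟨i, hil, by rw [hyx, he]⟩
    · exfalso
      have hbX : x + ((psum l i : ℕ) : ZMod n) ∈ bset n x l := mem_bset hil
      have hbY := hXY hbX
      have hne : x + ((psum l i : ℕ) : ZMod n) ≠ y := by
        rw [hyx]
        intro hc
        exact ne_of_cast_ne (by omega) htn (by omega) (add_left_cancel hc)
      refine hY hbY hy hne ?_
      rw [adj_iff]
      refine ⟨hne, Or.inl ?_⟩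
      rw [hyx, he]
      push_cast
      ring
    · exfalso
      have hbX : x + ((psum l (i+1) : ℕ) : ZMod n) ∈ bset n x l := by
        rcases lt_or_eq_of_le (by omega : i + 1 ≤ l.length) with hc | hc
        · exact mem_bset hc
        · rw [hc, psum_length, hs, ZMod.natCast_self, add_zero]
          exact base_mem_bset hlne
      have hbY := hXY hbX
      have hne : y ≠ x + ((psum l (i+1) : ℕ) : ZMod n) := by
        have hrw : ((psum l (i+1) : ℕ) : ZMod n) = ((psum l (i+1) % n : ℕ) : ZMod n) :=
          (ZMod.natCast_mod _ _).symm
        rw [hyx, hrw]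
        intro hc
        have hmod : psum l (i+1) % n < n := Nat.mod_lt _ (by omega)
        have heq := natCast_inj_of_lt htn hmod (add_left_cancel hc)
        rcases lt_or_eq_of_le hpin with h' | h'
        · rw [Nat.mod_eq_of_lt h'] at heq; omega
        · rw [h', Nat.mod_self] at heq; omega
      refine hY hy hbY hne ?_
      rw [adj_iff]
      refine ⟨hne, Or.inl ?_⟩
      rw [hyx, ← he]
      push_cast
      ring




lemma exists_list_of_isMIS {n : ℕ} (hn : 3 ≤ n) {X : Set (ZMod n)} (hX : IsMIS n X) :
    ∃ (x : ZMod n) (l : List ℕ), parts23 l ∧ l.sum = n ∧ bset n x l = X := by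
  haveI : NeZero n := ⟨by omega⟩
  classical
  have hne : X.Nonempty := by
    rcases Set.eq_empty_or_nonempty X with h | h
    · exfalso
      have h0 : X = {0} := hX.2 {0} (Set.pairwise_singleton _ _)
        (by rw [h]; exact Set.empty_subset _)
      rw [h] at h0
      exact Set.singleton_ne_empty (0 : ZMod n) h0.symm
    · exact h
  obtain ⟨x₀, hx₀⟩ := hne
  have B' : ∀ z : ZMod n, z ∉ X → z + 1 ∈ X ∨ z - 1 ∈ X := by
    intro z hz
    by_contra hc
    push_neg at hc
    have hpw : (insert z X).Pairwise (fun a b => ¬ (cycleGraph n).Adj a b) := by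
      have hsymm : Symmetric (fun a b : ZMod n => ¬ (cycleGraph n).Adj a b) :=
        fun a b hab h2 => hab h2.symm
      haveI : Std.Symm (fun a b : ZMod n => ¬ (cycleGraph n).Adj a b) := ⟨fun a b h => hsymm h⟩
      rw [Set.pairwise_insert_of_symm]
      refine ⟨hX.1, ?_⟩
      intro b hb hzb hadj
      rw [adj_iff] at hadj
      rcases hadj.2 with h | h
      · exact hc.1 (h ▸ hb)
      · refine hc.2 ?_
        have hb' : z - 1 = b := by rw [h]; ring
        rw [hb']; exact hb
    have heq := hX.2 _ hpw (Set.subset_insert z X)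
    have hzX : z ∈ X := by rw [heq]; exact Set.mem_insert z X
    exact hz hzX
  set T : Finset ℕ := (Set.toFinite X).toFinset.image (fun y => (y - x₀).val) with hTdef
  have memT : ∀ t : ℕ, t < n → (t ∈ T ↔ x₀ + (t : ZMod n) ∈ X) := by
    intro t htn
    constructor
    · intro ht
      rw [hTdef, Finset.mem_image] at ht
      obtain ⟨y, hy, hyt⟩ := ht
      rw [Set.Finite.mem_toFinset] at hy
      have he : x₀ + (t : ZMod n) = y := by
        rw [← hyt, ZMod.natCast_rightInverse (y - x₀)]
        ring
      rwa [he]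
    · intro h
      rw [hTdef, Finset.mem_image]
      refine ⟨x₀ + (t : ZMod n), (Set.Finite.mem_toFinset _).2 h, ?_⟩
      simp [ZMod.val_cast_of_lt htn]
  have T_lt : ∀ t ∈ T, t < n := by
    intro t ht
    rw [hTdef, Finset.mem_image] at ht
    obtain ⟨y, _, hyt⟩ := ht
    rw [← hyt]; exact ZMod.val_lt _
  have T0 : (0 : ℕ) ∈ T := by
    rw [memT 0 (by omega)]
    simpa using hx₀
  have F3 : ∀ t ∈ T, t + 1 ∉ T := by
    intro t ht htt
    have htn := T_lt t ht
    have ht1n := T_lt _ htt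
    have hy : x₀ + (t : ZMod n) ∈ X := (memT t htn).1 ht
    have hy' : x₀ + ((t+1 : ℕ) : ZMod n) ∈ X := (memT _ ht1n).1 htt
    have hne2 : x₀ + (t : ZMod n) ≠ x₀ + ((t+1:ℕ) : ZMod n) := by
      intro hc
      have := natCast_inj_of_lt htn ht1n (add_left_cancel hc)
      omega
    refine hX.1 hy hy' hne2 ?_
    rw [adj_iff]
    exact ⟨hne2, Or.inl (by push_cast; ring)⟩
  have F3' : (n - 1 : ℕ) ∉ T := by
    intro h
    have hy : x₀ + ((n-1:ℕ) : ZMod n) ∈ X := (memT _ (by omega)).1 h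
    have hne2 : x₀ + ((n-1:ℕ) : ZMod n) ≠ x₀ := by
      intro hc
      have hc' : x₀ + ((n-1:ℕ) : ZMod n) = x₀ + ((0:ℕ) : ZMod n) := by
        rw [Nat.cast_zero, add_zero]; exact hc
      have := natCast_inj_of_lt (by omega) (by omega) (add_left_cancel hc')
      omega
    refine hX.1 hy hx₀ hne2 ?_
    rw [adj_iff]
    refine ⟨hne2, Or.inl ?_⟩
    have hkey : ((n-1:ℕ) : ZMod n) + 1 = 0 := by
      have h2 : ((n-1:ℕ) : ZMod n) + ((1:ℕ) : ZMod n) = ((n:ℕ) : ZMod n) := by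
        rw [← Nat.cast_add]; congr 1; omega
      rw [Nat.cast_one] at h2
      rw [h2, ZMod.natCast_self]
    rw [add_assoc, hkey, add_zero]
  set s : List ℕ := T.sort (· ≤ ·) with hsdef
  have hsort : s.SortedLT := T.sortedLT_sort
  have hmems : ∀ a : ℕ, a ∈ s ↔ a ∈ T := fun a => Finset.mem_sort _
  set m : ℕ := s.length with hmdef
  have hm0 : 0 < m :=
    List.length_pos_iff.2 (List.ne_nil_of_mem ((hmems 0).2 T0))
  have hget : ∀ i (h : i < m), s.getD i 0 = s.get ⟨i, h⟩ := fun i h => List.getD_eq_get s 0 ⟨i, h⟩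
  have hmono : ∀ i j, i < j → j < m → s.getD i 0 < s.getD j 0 := by
    intro i j hij hj
    rw [hget i (by omega), hget j hj]
    exact hsort.strictMono_get (by exact hij)
  have hmono' : ∀ i j, i ≤ j → j < m → s.getD i 0 ≤ s.getD j 0 := by
    intro i j hij hj
    rcases eq_or_lt_of_le hij with rfl | h
    · exact le_rfl
    · exact le_of_lt (hmono _ _ h hj)
  have hmemget : ∀ i, i < m → s.getD i 0 ∈ T := by
    intro i h
    rw [hget i h]
    exact (hmems _).1 (s.get_mem _)
  have hidx : ∀ t ∈ T, ∃ i, i < m ∧ s.getD i 0 = t := by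
    intro t ht
    obtain ⟨⟨i, hi⟩, hgt⟩ := List.mem_iff_get.1 ((hmems t).2 ht)
    exact ⟨i, hi, by rw [hget i hi]; exact hgt⟩
  have h0 : s.getD 0 0 = 0 := by
    have hle : s.getD 0 0 ≤ 0 := by
      obtain ⟨i, hi, he⟩ := hidx 0 T0
      have h2 := hmono' 0 i (by omega) hi
      omega
    omega
  have hbetween : ∀ i v, i + 1 < m → s.getD i 0 < v → v < s.getD (i+1) 0 → v ∉ T := by
    intro i v h1 h2 h3 hv
    obtain ⟨j, hj, he⟩ := hidx v hv
    rcases lt_or_ge j (i+1) with hc | hc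
    · have := hmono' j i (by omega) (by omega); omega
    · have := hmono' (i+1) j hc hj; omega
  have hmax : ∀ v, s.getD (m-1) 0 < v → v ∉ T := by
    intro v hv hvT
    obtain ⟨j, hj, he⟩ := hidx v hvT
    have := hmono' j (m-1) (by omega) (by omega)
    omega
  have hgap3 : ∀ t, t ∈ T → t + 1 ∉ T → t + 2 ∉ T → t + 3 ∉ T → t + 4 ≤ n → False := by
    intro t ht h1 h2 h3 h4
    have hz : x₀ + ((t+2 : ℕ) : ZMod n) ∉ X := fun hc => h2 ((memT _ (by omega)).2 hc)
    rcases B' _ hz with hc | hc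
    · have hm : x₀ + ((t+3:ℕ) : ZMod n) ∈ X := by
        have he : x₀ + ((t+2:ℕ) : ZMod n) + 1 = x₀ + ((t+3:ℕ) : ZMod n) := by push_cast; ring
        rwa [he] at hc
      exact h3 ((memT _ (by omega)).2 hm)
    · have hm : x₀ + ((t+1:ℕ) : ZMod n) ∈ X := by
        have he : x₀ + ((t+2:ℕ) : ZMod n) - 1 = x₀ + ((t+1:ℕ) : ZMod n) := by push_cast; ring
        rwa [he] at hc
      exact h1 ((memT _ (by omega)).2 hm)
  set f : Fin m → ℕ :=
    fun i => (if (i:ℕ) + 1 < m then s.getD ((i:ℕ)+1) 0 else n) - s.getD (i:ℕ) 0 with hfdef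
  set l : List ℕ := List.ofFn f with hldef
  have hlen : l.length = m := by rw [hldef]; exact List.length_ofFn
  have P : ∀ i, i ≤ m → psum l i = if i < m then s.getD i 0 else n := by
    intro i
    induction i with
    | zero => intro _; rw [psum_zero, if_pos hm0, h0]
    | succ i ih =>
      intro hi
      have hi' : i < m := by omega
      have hil : i < l.length := by rw [hlen]; exact hi'
      have hstep := psum_succ l i hil
      have hfv : l.get ⟨i, hil⟩ = (if i + 1 < m then s.getD (i+1) 0 else n) - s.getD i 0 := by
        have hg := List.get_ofFn f ⟨i, by simp only [hldef] at hil; exact hil⟩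
        rw [hg]
        simp only [hfdef, Fin.coe_cast]
      have hlt : s.getD i 0 < n := T_lt _ (hmemget i hi')
      have hmlt : i + 1 < m → s.getD i 0 < s.getD (i+1) 0 :=
        fun hc => hmono i (i+1) (by omega) hc
      rw [hstep, ih (by omega), hfv, if_pos hi']
      split_ifs with hc
      · have := hmlt hc; omega
      · omega
  have hsum : l.sum = n := by
    have h1 := P m le_rfl
    rw [if_neg (lt_irrefl m)] at h1
    have h2 := psum_length l
    rw [hlen] at h2
    omega
  have hparts : parts23 l := by
    intro a ha
    rw [hldef, List.mem_ofFn] at ha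
    obtain ⟨⟨i, hi⟩, rfl⟩ := Set.mem_range.1 ha
    simp only [hfdef]
    by_cases hc : i + 1 < m
    · rw [if_pos hc]
      have h1 : s.getD i 0 < s.getD (i+1) 0 := hmono i (i+1) (by omega) hc
      have h2 : s.getD (i+1) 0 < n := T_lt _ (hmemget _ hc)
      have htT := hmemget i hi
      have ht'T := hmemget (i+1) hc
      have hg2 : s.getD i 0 + 2 ≤ s.getD (i+1) 0 := by
        rcases (by omega : s.getD i 0 + 1 = s.getD (i+1) 0 ∨ s.getD i 0 + 2 ≤ s.getD (i+1) 0)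
          with h | h
        · exact absurd (by rw [h]; exact ht'T) (F3 _ htT)
        · exact h
      have hg3 : s.getD (i+1) 0 ≤ s.getD i 0 + 3 := by
        by_contra hg
        push_neg at hg
        refine hgap3 (s.getD i 0) htT (F3 _ htT) ?_ ?_ (by omega)
        · exact hbetween i _ hc (by omega) (by omega)
        · exact hbetween i _ hc (by omega) (by omega)
      omega
    · rw [if_neg hc]
      have hi1 : i = m - 1 := by omega
      have htT := hmemget i hi
      have h2 : s.getD i 0 < n := T_lt _ htT
      have hmax' : ∀ v, s.getD i 0 < v → v ∉ T := by
        intro v hv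
        refine hmax v ?_
        rw [← hi1]; exact hv
      have hg2 : s.getD i 0 + 2 ≤ n := by
        rcases (by omega : s.getD i 0 = n - 1 ∨ s.getD i 0 + 2 ≤ n) with h | h
        · exact absurd (by rw [← h]; exact htT) F3'
        · exact h
      have hg3 : n ≤ s.getD i 0 + 3 := by
        by_contra hg
        push_neg at hg
        exact hgap3 (s.getD i 0) htT (F3 _ htT) (hmax' _ (by omega)) (hmax' _ (by omega))
          (by omega)
      omega
  refine ⟨x₀, l, hparts, hsum, ?_⟩
  ext y
  constructor
  · rintro ⟨i, hil, rfl⟩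
    rw [hlen] at hil
    have hp := P i (by omega)
    rw [if_pos hil] at hp
    rw [hp]
    exact (memT _ (T_lt _ (hmemget i hil))).1 (hmemget i hil)
  · intro hy
    have ht : (y - x₀).val ∈ T := by
      rw [memT _ (ZMod.val_lt _), ZMod.natCast_rightInverse (y - x₀)]
      have he : x₀ + (y - x₀) = y := by ring
      rw [he]; exact hy
    obtain ⟨i, hi, he⟩ := hidx _ ht
    refine ⟨i, by rw [hlen]; exact hi, ?_⟩
    have hp := P i (by omega)
    rw [if_pos hi] at hp
    rw [hp, he, ZMod.natCast_rightInverse (y - x₀)]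
    ring




lemma dih_dih {n : ℕ} (g h : ZMod n × Bool) (x : ZMod n) :
    dihApply n g (dihApply n h x)
      = dihApply n (if g.2 then g.1 - h.1 else h.1 + g.1, xor h.2 g.2) x := by
  rcases g with ⟨b, eg⟩
  rcases h with ⟨a, eh⟩
  cases eg <;> cases eh <;> simp [dihApply] <;> ring

lemma dih_image_dih {n : ℕ} (g h : ZMod n × Bool) (X : Set (ZMod n)) :
    dihApply n g '' (dihApply n h '' X)
      = dihApply n (if g.2 then g.1 - h.1 else h.1 + g.1, xor h.2 g.2) '' X := by
  rw [Set.image_image]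
  exact Set.image_congr fun x _ => dih_dih g h x

lemma dih_id {n : ℕ} (X : Set (ZMod n)) : dihApply n (0, false) '' X = X := by
  have h : ∀ x : ZMod n, dihApply n (0, false) x = x := fun x => by simp [dihApply]
  rw [Set.image_congr (fun x _ => h x), Set.image_id']

lemma dih_inv {n : ℕ} (g : ZMod n × Bool) :
    ∃ g', ∀ X : Set (ZMod n), dihApply n g' '' (dihApply n g '' X) = X := by
  rcases g with ⟨a, e⟩
  cases e
  · refine ⟨(-a, false), fun X => ?_⟩
    rw [dih_image_dih]
    have : ((if (false : Bool) = true then -a - a else a + -a, xor false false) :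
        ZMod n × Bool) = (0, false) := by simp
    rw [this, dih_id]
  · refine ⟨(a, true), fun X => ?_⟩
    rw [dih_image_dih]
    have : ((if (true : Bool) = true then a - a else a + a, xor true true) :
        ZMod n × Bool) = (0, false) := by simp
    rw [this, dih_id]

lemma mem_dOrbit_self {n : ℕ} (X : Set (ZMod n)) : X ∈ dOrbit n X := ⟨(0, false), dih_id X⟩

lemma dOrbit_eq_of_mem {n : ℕ} {X Y : Set (ZMod n)} (h : Y ∈ dOrbit n X) :
    dOrbit n Y = dOrbit n X := by
  obtain ⟨g, hg⟩ := h
  ext Z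
  constructor
  · rintro ⟨b, rfl⟩
    exact ⟨(if b.2 then b.1 - g.1 else g.1 + b.1, xor g.2 b.2), by rw [← hg, dih_image_dih]⟩
  · rintro ⟨b, rfl⟩
    obtain ⟨g', hg'⟩ := dih_inv g
    have hX : dihApply n g' '' Y = X := by rw [← hg, hg']
    exact ⟨(if b.2 then b.1 - g'.1 else g'.1 + b.1, xor g'.2 b.2), by rw [← hX, dih_image_dih]⟩

lemma dih_false_eq {n : ℕ} (c : ZMod n) (X : Set (ZMod n)) :
    dihApply n (c, false) '' X = (fun z => z + c) '' X := rfl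

lemma dih_true_eq {n : ℕ} (c : ZMod n) (X : Set (ZMod n)) :
    dihApply n (c, true) '' X = (fun z => c - z) '' X := rfl

lemma F_eq {n : ℕ} (hn : 3 ≤ n) {x₀ : ZMod n} {l₀ : List ℕ}
    (h₀ : parts23 l₀) (hs₀ : l₀.sum = n) :
    {l : List ℕ | parts23 l ∧ l.sum = n ∧ ∃ x, bset n x l ∈ dOrbit n (bset n x₀ l₀)}
      = rotRevClass l₀ := by
  have hlne : l₀ ≠ [] := by intro e; rw [e] at hs₀; simp at hs₀; omega
  ext l
  simp only [Set.mem_setOf_eq, rotRevClass]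
  constructor
  · rintro ⟨hp, hs, x, g, hg⟩
    rcases g with ⟨c, e⟩
    cases e
    · rw [dih_false_eq, bset_translate] at hg
      obtain ⟨k, hk⟩ := bset_rigid hn h₀ hs₀ hp hs hg
      exact ⟨k, Or.inl hk⟩
    · rw [dih_true_eq, bset_reflect _ _ _ hs₀] at hg
      obtain ⟨k, hk⟩ := bset_rigid hn (parts23_reverse h₀)
        (by rw [List.sum_reverse]; exact hs₀) hp hs hg
      exact ⟨k, Or.inr hk⟩
  · rintro ⟨k, hk | hk⟩
    · subst hk
      refine ⟨parts23_rotate h₀ k, by rw [sum_rotate]; exact hs₀, ?_⟩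
      have hkm : k % l₀.length ≤ l₀.length :=
        le_of_lt (Nat.mod_lt _ (List.length_pos_iff.2 hlne))
      have hrot := bset_rotate x₀ l₀ hs₀ hkm
      rw [List.rotate_mod] at hrot
      exact ⟨x₀ + ((psum l₀ (k % l₀.length) : ℕ) : ZMod n), (0, false),
        by rw [dih_id]; exact hrot⟩
    · subst hk
      refine ⟨parts23_rotate (parts23_reverse h₀) k,
        by rw [sum_rotate, List.sum_reverse]; exact hs₀, ?_⟩
      have hrevs : l₀.reverse.sum = n := by rw [List.sum_reverse]; exact hs₀
      have hrevne : l₀.reverse ≠ [] := by simpa using hlne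
      have hkm : k % l₀.reverse.length ≤ l₀.reverse.length :=
        le_of_lt (Nat.mod_lt _ (List.length_pos_iff.2 hrevne))
      have hrefl := bset_reflect x₀ x₀ l₀ hs₀
      have hrot := bset_rotate (x₀ - x₀) l₀.reverse hrevs hkm
      rw [List.rotate_mod] at hrot
      refine ⟨(x₀ - x₀) + ((psum l₀.reverse (k % l₀.reverse.length) : ℕ) : ZMod n),
        (x₀, true), ?_⟩
      rw [dih_true_eq, hrefl]
      exact hrot

theorem main_count (n : ℕ) (hn : 3 ≤ n) :
    (misOrbits n).ncard
      = {C : Set (List ℕ) | ∃ l, parts23 l ∧ l.sum = n ∧ C = rotRevClass l}.ncard := by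
  classical
  set F : Set (Set (ZMod n)) → Set (List ℕ) :=
    fun O => {l | parts23 l ∧ l.sum = n ∧ ∃ x, bset n x l ∈ O} with hF
  have himg : F '' (misOrbits n)
      = {C : Set (List ℕ) | ∃ l, parts23 l ∧ l.sum = n ∧ C = rotRevClass l} := by
    ext C
    constructor
    · rintro ⟨O, ⟨X, hX, rfl⟩, rfl⟩
      obtain ⟨x, l, hp, hs, hbx⟩ := exists_list_of_isMIS hn hX
      subst hbx
      refine ⟨l, hp, hs, ?_⟩
      simp only [hF]
      exact F_eq hn hp hs
    · rintro ⟨l, hp, hs, rfl⟩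
      refine ⟨dOrbit n (bset n 0 l), ⟨bset n 0 l, isMIS_bset hn hp hs 0, rfl⟩, ?_⟩
      simp only [hF]
      exact F_eq hn hp hs
  have hinj : Set.InjOn F (misOrbits n) := by
    rintro O₁ ⟨X₁, hX₁, rfl⟩ O₂ ⟨X₂, hX₂, rfl⟩ hFeq
    obtain ⟨x₁, l₁, hp₁, hs₁, hb₁⟩ := exists_list_of_isMIS hn hX₁
    have hl₁ : l₁ ∈ F (dOrbit n X₁) := ⟨hp₁, hs₁, x₁, by rw [hb₁]; exact mem_dOrbit_self X₁⟩
    rw [hFeq] at hl₁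
    simp only [hF, Set.mem_setOf_eq] at hl₁
    obtain ⟨-, -, x, g, hg⟩ := hl₁
    have htr : dihApply n (x - x₁, false) '' X₁ = bset n x l₁ := by
      rw [dih_false_eq, ← hb₁, bset_translate]
      have hxx : x₁ + (x - x₁) = x := by ring
      rw [hxx]
    have h1 : bset n x l₁ ∈ dOrbit n X₁ := ⟨_, htr⟩
    have h2 : bset n x l₁ ∈ dOrbit n X₂ := ⟨_, hg⟩
    rw [← dOrbit_eq_of_mem h1, ← dOrbit_eq_of_mem h2]
  rw [← himg, Set.ncard_image_of_injOn hinj]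


end MISaux

/-- The number of MISs of C_n up to rotation and reflection equals the number of cyclic
compositions of n with parts in {2,3}, identified also under reversal. -/
theorem orb_eq_cyclic_rev_compositions (n : ℕ) (hn : 3 ≤ n) :
    orb n =
      {C : Set (List ℕ) | ∃ l, parts23 l ∧ l.sum = n ∧ C = rotRevClass l}.ncard :=
  MISaux.main_count n hn
end

section
/- Let orb, orb_1 and r be the sequences defined by: orb(n) = number of orbits of maximal independent sets of C_n under D_{2n}; orb_1(n) = number of such orbits with trivial stabilizer; r(n) = number of such orbits whose elements have at least one symmetry axis. Then orb = r + orb_1 ∗ 1, where ∗ denotes Dirichlet convolution and 1 is the constant sequence 1. -/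
/-! ### Auxiliary development -/

section Aux

open Set

variable {n : ℕ}

lemma cycle_adj {a b : ZMod n} :
    (cycleGraph n).Adj a b ↔ a ≠ b ∧ (b = a + 1 ∨ a = b + 1) := by
  simp [cycleGraph, SimpleGraph.fromRel_adj]

/-- Multiplication in the dihedral group as it acts via `dihApply`. -/
def dmul (g h : ZMod n × Bool) : ZMod n × Bool :=
  (if g.2 then g.1 - h.1 else g.1 + h.1, xor g.2 h.2)

def dinv (g : ZMod n × Bool) : ZMod n × Bool := if g.2 then g else (-g.1, false)

lemma dihApply_dihApply (g h : ZMod n × Bool) (x : ZMod n) :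
    dihApply n g (dihApply n h x) = dihApply n (dmul g h) x := by
  obtain ⟨a, ε⟩ := g; obtain ⟨b, δ⟩ := h
  cases ε <;> cases δ <;> simp [dihApply, dmul] <;> ring

lemma dihApply_one (x : ZMod n) : dihApply n (0, false) x = x := by simp [dihApply]

lemma image_image_dih (g h : ZMod n × Bool) (X : Set (ZMod n)) :
    dihApply n g '' (dihApply n h '' X) = dihApply n (dmul g h) '' X := by
  rw [Set.image_image]; exact Set.image_congr fun x _ => dihApply_dihApply g h x

lemma dih_one (X : Set (ZMod n)) : dihApply n (0, false) '' X = X := by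
  have h : dihApply n ((0 : ZMod n), false) = id := funext fun x => dihApply_one x
  rw [h, Set.image_id]

lemma dmul_one (g : ZMod n × Bool) : dmul g (0, false) = g := by
  obtain ⟨a, ε⟩ := g; cases ε <;> simp [dmul]

lemma dmul_dinv (g : ZMod n × Bool) : dmul g (dinv g) = (0, false) := by
  obtain ⟨a, ε⟩ := g; cases ε <;> simp [dmul, dinv]

lemma dinv_dmul (g : ZMod n × Bool) : dmul (dinv g) g = (0, false) := by
  obtain ⟨a, ε⟩ := g; cases ε <;> simp [dmul, dinv]

lemma dmul_assoc (g h k : ZMod n × Bool) : dmul (dmul g h) k = dmul g (dmul h k) := by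
  obtain ⟨a, ε⟩ := g; obtain ⟨b, δ⟩ := h; obtain ⟨c, γ⟩ := k
  cases ε <;> cases δ <;> cases γ <;> simp [dmul] <;> ring

lemma image_dinv_cancel (g : ZMod n × Bool) (X : Set (ZMod n)) :
    dihApply n (dinv g) '' (dihApply n g '' X) = X := by
  rw [image_image_dih, dinv_dmul, dih_one]

lemma image_cancel_dinv (g : ZMod n × Bool) (X : Set (ZMod n)) :
    dihApply n g '' (dihApply n (dinv g) '' X) = X := by
  rw [image_image_dih, dmul_dinv, dih_one]

lemma mem_dOrbit_self (X : Set (ZMod n)) : X ∈ dOrbit n X := ⟨(0, false), dih_one X⟩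

lemma dOrbit_image (g : ZMod n × Bool) (X : Set (ZMod n)) :
    dOrbit n (dihApply n g '' X) = dOrbit n X := by
  ext Y; constructor
  · rintro ⟨h, rfl⟩; exact ⟨dmul h g, (image_image_dih h g X).symm⟩
  · rintro ⟨h, rfl⟩
    exact ⟨dmul h (dinv g), by rw [← image_image_dih, image_dinv_cancel]⟩

lemma dih_true (k : ZMod n) : (fun x => k - x) = dihApply n (k, true) := by
  funext x; simp [dihApply]

lemma mem_rStab {k : ZMod n} {X : Set (ZMod n)} :
    k ∈ rStab n X ↔ dihApply n (k, false) '' X = X := by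
  have h : rotApply n k = dihApply n (k, false) := by funext x; simp [rotApply, dihApply]
  rw [rStab, Set.mem_setOf_eq, h]

lemma rStab_zero (X : Set (ZMod n)) : (0 : ZMod n) ∈ rStab n X := mem_rStab.2 (dih_one X)

lemma rStab_add {j k : ZMod n} {X : Set (ZMod n)} (hj : j ∈ rStab n X) (hk : k ∈ rStab n X) :
    j + k ∈ rStab n X := by
  rw [mem_rStab] at *
  rw [show ((j + k : ZMod n), false) = dmul (j, false) (k, false) from by simp [dmul],
    ← image_image_dih, hk, hj]

lemma rStab_neg {k : ZMod n} {X : Set (ZMod n)} (h : k ∈ rStab n X) : -k ∈ rStab n X := by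
  rw [mem_rStab] at *
  conv_lhs => rw [← h]
  rw [image_image_dih, show dmul ((-k : ZMod n), false) (k, false) = (0, false) from by
    simp [dmul], dih_one]

lemma rStab_nsmul (m : ℕ) {k : ZMod n} {X : Set (ZMod n)} (h : k ∈ rStab n X) :
    (m • k) ∈ rStab n X := by
  induction m with
  | zero => simpa using rStab_zero X
  | succ m ih => rw [succ_nsmul]; exact rStab_add ih h

/-- The set of (positive) periods of `X`. -/
def perSet (n : ℕ) (X : Set (ZMod n)) : Set ℕ :=
  {t | 0 < t ∧ ((t : ℕ) : ZMod n) ∈ rStab n X}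

/-- The minimal positive rotation period of `X`. -/
noncomputable def minP (n : ℕ) (X : Set (ZMod n)) : ℕ := sInf (perSet n X)

lemma n_mem_perSet (hn : 0 < n) (X : Set (ZMod n)) : n ∈ perSet n X :=
  ⟨hn, by rw [ZMod.natCast_self]; exact rStab_zero X⟩

lemma minP_mem (hn : 0 < n) (X : Set (ZMod n)) : minP n X ∈ perSet n X :=
  Nat.sInf_mem ⟨n, n_mem_perSet hn X⟩

lemma minP_dvd (hn : 0 < n) {X : Set (ZMod n)} {t : ℕ}
    (h : ((t : ℕ) : ZMod n) ∈ rStab n X) : minP n X ∣ t := by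
  obtain ⟨hd1, hd2⟩ := minP_mem hn X
  set d := minP n X with hdd
  set r := t % d with hr
  set q := t / d with hq
  have e : q * d + r = t := by rw [hr, hq, mul_comm]; exact Nat.div_add_mod t d
  have hmod : ((r : ℕ) : ZMod n) ∈ rStab n X := by
    have key : ((r : ℕ) : ZMod n) = ((t : ℕ) : ZMod n) + -(((q * d : ℕ) : ZMod n)) := by
      rw [← e]; push_cast; ring
    rw [key]
    refine rStab_add h (rStab_neg ?_)
    rw [show (((q * d : ℕ)) : ZMod n) = q • ((d : ℕ) : ZMod n) from by
      push_cast [nsmul_eq_mul]; ring]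
    exact rStab_nsmul q hd2
  by_contra hndvd
  have h1 : 0 < r := Nat.pos_of_ne_zero fun h0 => hndvd (Nat.dvd_of_mod_eq_zero h0)
  have h2 : r < d := Nat.mod_lt _ hd1
  have hrmem : r ∈ perSet n X := by
    simp only [perSet, Set.mem_setOf_eq]; exact ⟨h1, hmod⟩
  have hle : d ≤ r := Nat.sInf_le hrmem
  omega

lemma stab_conj (g h : ZMod n × Bool) (X : Set (ZMod n)) :
    dihApply n h '' (dihApply n g '' X) = dihApply n g '' X ↔
    dihApply n (dmul (dinv g) (dmul h g)) '' X = X := by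
  constructor
  · intro he
    calc dihApply n (dmul (dinv g) (dmul h g)) '' X
        = dihApply n (dinv g) '' (dihApply n (dmul h g) '' X) :=
          (image_image_dih _ _ _).symm
      _ = dihApply n (dinv g) '' (dihApply n h '' (dihApply n g '' X)) := by
          rw [image_image_dih h g]
      _ = dihApply n (dinv g) '' (dihApply n g '' X) := by rw [he]
      _ = X := image_dinv_cancel g X
  · intro he
    calc dihApply n h '' (dihApply n g '' X)
        = dihApply n (dmul h g) '' X := image_image_dih h g X
      _ = dihApply n g '' (dihApply n (dinv g) '' (dihApply n (dmul h g) '' X)) :=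
          (image_cancel_dinv g _).symm
      _ = dihApply n g '' (dihApply n (dmul (dinv g) (dmul h g)) '' X) := by
          rw [image_image_dih (dinv g)]
      _ = dihApply n g '' X := by rw [he]

lemma rStab_image_iff (a : ZMod n) (ε : Bool) (k : ZMod n) (X : Set (ZMod n)) :
    k ∈ rStab n (dihApply n (a, ε) '' X) ↔ (if ε then -k else k) ∈ rStab n X := by
  have hg : dmul (dinv (a, ε)) (dmul (k, false) (a, ε)) = ((if ε then -k else k), false) := by
    cases ε <;> simp [dmul, dinv] <;> ring
  rw [mem_rStab, stab_conj, hg, mem_rStab]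

lemma perSet_image (g : ZMod n × Bool) (X : Set (ZMod n)) :
    perSet n (dihApply n g '' X) = perSet n X := by
  obtain ⟨a, ε⟩ := g
  ext t
  simp only [perSet, Set.mem_setOf_eq, rStab_image_iff]
  cases ε
  · simp
  · simp only [if_true]
    constructor
    · rintro ⟨h1, h2⟩
      exact ⟨h1, by simpa using rStab_neg h2⟩
    · rintro ⟨h1, h2⟩
      exact ⟨h1, rStab_neg h2⟩

lemma minP_image (g : ZMod n × Bool) (X : Set (ZMod n)) :
    minP n (dihApply n g '' X) = minP n X := by
  unfold minP; rw [perSet_image]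

lemma hasAxis_image {X : Set (ZMod n)} (g : ZMod n × Bool) (h : HasAxis n X) :
    HasAxis n (dihApply n g '' X) := by
  obtain ⟨k, hk⟩ := h
  rw [dih_true] at hk
  refine ⟨(dmul g (dmul (k, true) (dinv g))).1, ?_⟩
  have he2 : (dmul g (dmul (k, true) (dinv g))).2 = true := by
    obtain ⟨a, ε⟩ := g; cases ε <;> simp [dmul, dinv]
  have heq : (fun x => (dmul g (dmul (k, true) (dinv g))).1 - x)
      = dihApply n (dmul g (dmul (k, true) (dinv g))) := by
    funext x; simp [dihApply, he2]
  rw [heq, image_image_dih, dmul_assoc, dmul_assoc, dinv_dmul, dmul_one,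
    ← image_image_dih, hk]

lemma hasAxis_image_iff (g : ZMod n × Bool) (X : Set (ZMod n)) :
    HasAxis n (dihApply n g '' X) ↔ HasAxis n X := by
  constructor
  · intro h
    have h2 := hasAxis_image (dinv g) h
    rwa [image_dinv_cancel] at h2
  · exact hasAxis_image g

lemma isMIS_iff_s14 (X : Set (ZMod n)) :
    IsMIS n X ↔ X.Pairwise (fun a b => ¬ (cycleGraph n).Adj a b) ∧
      ∀ z ∉ X, ∃ a ∈ X, (cycleGraph n).Adj a z := by
  constructor
  · rintro ⟨h1, h2⟩
    refine ⟨h1, fun z hz => ?_⟩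
    by_contra hno; push_neg at hno
    have hp : (insert z X).Pairwise (fun a b => ¬ (cycleGraph n).Adj a b) :=
      Set.pairwise_insert.2 ⟨h1, fun b hb _ =>
        ⟨fun hadj => hno b hb hadj.symm, fun hadj => hno b hb hadj⟩⟩
    have := h2 _ hp (Set.subset_insert z X)
    exact hz (this ▸ Set.mem_insert z X)
  · rintro ⟨h1, h2⟩
    refine ⟨h1, fun Y hY hXY => ?_⟩
    refine Set.Subset.antisymm hXY fun z hzY => ?_
    by_contra hzX
    obtain ⟨a, haX, hadj⟩ := h2 z hzX
    exact hY (hXY haX) hzY hadj.ne hadj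

lemma zmod_one_ne_zero {m : ℕ} (hm : 2 ≤ m) : (1 : ZMod m) ≠ 0 := by
  haveI : NeZero m := ⟨by omega⟩
  haveI : Fact (1 < m) := ⟨by omega⟩
  intro h
  have := congrArg ZMod.val h
  rw [ZMod.val_one, ZMod.val_zero] at this
  exact one_ne_zero this

lemma minP_ne_one (hn : 3 ≤ n) {X : Set (ZMod n)} (hX : IsMIS n X) : minP n X ≠ 1 := by
  intro h
  have h1 : ((1 : ℕ) : ZMod n) ∈ rStab n X := by
    have := (minP_mem (by omega) X).2; rwa [h] at this
  rw [Nat.cast_one] at h1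
  rcases Set.eq_empty_or_nonempty X with rfl | ⟨x, hx⟩
  · obtain ⟨a, ha, -⟩ := ((isMIS_iff_s14 _).1 hX).2 0 (by simp)
    exact ha
  · have hx1 : x + 1 ∈ X := by
      have := mem_rStab.1 h1
      have hmem : dihApply n ((1 : ZMod n), false) x ∈ X :=
        this ▸ Set.mem_image_of_mem _ hx
      simpa [dihApply] using hmem
    have hne : x ≠ x + 1 := fun hcon =>
      zmod_one_ne_zero (by omega) (left_eq_add.mp hcon)
    exact hX.1 hx hx1 hne (cycle_adj.2 ⟨hne, Or.inl rfl⟩)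

/-! ### The reduction map `ZMod n → ZMod d` -/

/-- The reduction map. -/
def pr {n d : ℕ} (hd : d ∣ n) : ZMod n → ZMod d := ZMod.castHom hd (ZMod d)

section Reduction

variable {d : ℕ} (hd : d ∣ n)

lemma pr_natCast (t : ℕ) : pr hd ((t : ℕ) : ZMod n) = ((t : ℕ) : ZMod d) :=
  map_natCast (ZMod.castHom hd (ZMod d)) t

lemma pr_add (x y : ZMod n) : pr hd (x + y) = pr hd x + pr hd y :=
  map_add (ZMod.castHom hd (ZMod d)) x y

lemma pr_sub (x y : ZMod n) : pr hd (x - y) = pr hd x - pr hd y :=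
  map_sub (ZMod.castHom hd (ZMod d)) x y

lemma pr_one : pr hd (1 : ZMod n) = 1 := map_one (ZMod.castHom hd (ZMod d))

lemma pr_lift [NeZero d] (k : ZMod d) : pr hd ((k.val : ZMod n)) = k := by
  rw [pr_natCast]; exact ZMod.natCast_rightInverse k

lemma pr_surjective [NeZero d] : Function.Surjective (pr hd) := fun k =>
  ⟨(k.val : ZMod n), pr_lift hd k⟩

lemma pr_dih (g : ZMod n × Bool) (x : ZMod n) :
    pr hd (dihApply n g x) = dihApply d (pr hd g.1, g.2) (pr hd x) := by
  obtain ⟨a, ε⟩ := g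
  cases ε <;> simp [dihApply, pr, map_add, map_sub]

lemma pr_image_dih (g : ZMod n × Bool) (X : Set (ZMod n)) :
    pr hd '' (dihApply n g '' X) = dihApply d (pr hd g.1, g.2) '' (pr hd '' X) := by
  rw [Set.image_image, Set.image_image]
  exact Set.image_congr fun x _ => pr_dih hd g x

lemma pr_dinv (g : ZMod n × Bool) :
    ((pr hd (dinv g).1, (dinv g).2) : ZMod d × Bool) = dinv (pr hd g.1, g.2) := by
  obtain ⟨a, ε⟩ := g; cases ε <;> simp [dinv, pr, map_neg]

lemma dih_preimage (g : ZMod n × Bool) (S : Set (ZMod d)) :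
    dihApply n g '' (pr hd ⁻¹' S) = pr hd ⁻¹' (dihApply d (pr hd g.1, g.2) '' S) := by
  ext x
  constructor
  · rintro ⟨y, hy, rfl⟩
    exact ⟨pr hd y, hy, (pr_dih hd g y).symm⟩
  · rintro ⟨s, hs, hx⟩
    refine ⟨dihApply n (dinv g) x, ?_, ?_⟩
    · show pr hd (dihApply n (dinv g) x) ∈ S
      rw [pr_dih, pr_dinv, ← hx, dihApply_dihApply, dinv_dmul, dihApply_one]
      exact hs
    · rw [dihApply_dihApply, dmul_dinv, dihApply_one]

lemma rStab_of_ker (hn : 0 < n) {X : Set (ZMod n)}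
    (hper : ((d : ℕ) : ZMod n) ∈ rStab n X) {x y : ZMod n}
    (hy : y ∈ X) (hxy : pr hd x = pr hd y) : x ∈ X := by
  haveI : NeZero n := ⟨hn.ne'⟩
  have h0 : pr hd (x - y) = 0 := by
    show ZMod.castHom hd (ZMod d) (x - y) = 0
    rw [map_sub]
    have hx' : ZMod.castHom hd (ZMod d) x = ZMod.castHom hd (ZMod d) y := hxy
    rw [hx', sub_self]
  have hv : (((x - y).val : ℕ) : ZMod n) = x - y := ZMod.natCast_rightInverse (x - y)
  have hdvd : d ∣ (x - y).val := by
    rw [← ZMod.natCast_eq_zero_iff]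
    rw [← pr_natCast hd, hv]
    exact h0
  obtain ⟨m, hm⟩ := hdvd
  have hrot : (x - y) ∈ rStab n X := by
    rw [← hv, hm]
    rw [show (((d * m : ℕ)) : ZMod n) = m • ((d : ℕ) : ZMod n) from by
      push_cast [nsmul_eq_mul]; ring]
    exact rStab_nsmul m hper
  have himg := mem_rStab.1 hrot
  have hmem : dihApply n (x - y, false) y ∈ X := himg ▸ Set.mem_image_of_mem _ hy
  have e : dihApply n (x - y, false) y = x := by simp [dihApply]
  rwa [e] at hmem

lemma preimage_image_self (hn : 0 < n) {X : Set (ZMod n)}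
    (hper : ((d : ℕ) : ZMod n) ∈ rStab n X) : pr hd ⁻¹' (pr hd '' X) = X := by
  ext x
  constructor
  · rintro ⟨y, hy, hxy⟩
    exact rStab_of_ker hd hn hper hy hxy.symm
  · intro hx
    exact Set.mem_image_of_mem _ hx

end Reduction

lemma self_ne_add_one {m : ℕ} (hm : 2 ≤ m) (x : ZMod m) : x ≠ x + 1 := fun hcon =>
  zmod_one_ne_zero hm (left_eq_add.mp hcon)

section Reduction2

variable {d : ℕ} (hd : d ∣ n)

/-- The image of a periodic MIS is an MIS of the quotient cycle. -/
lemma quot_isMIS (hn : 3 ≤ n) [NeZero d] {X : Set (ZMod n)} (hX : IsMIS n X)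
    (hper : ((d : ℕ) : ZMod n) ∈ rStab n X) : IsMIS d (pr hd '' X) := by
  obtain ⟨hind, hmax⟩ := (isMIS_iff_s14 X).1 hX
  rw [isMIS_iff_s14]
  constructor
  · rintro u ⟨x, hx, rfl⟩ v ⟨y, hy, rfl⟩ huv hadj
    rw [cycle_adj] at hadj
    obtain ⟨-, h1 | h1⟩ := hadj
    · have hx1 : x + 1 ∈ X := by
        refine rStab_of_ker hd (by omega) hper hy ?_
        show ZMod.castHom hd (ZMod d) (x + 1) = _
        rw [map_add, map_one]
        exact h1.symm
      have hne : x ≠ x + 1 := self_ne_add_one (by omega) x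
      exact hind hx hx1 hne (cycle_adj.2 ⟨hne, Or.inl rfl⟩)
    · have hy1 : y + 1 ∈ X := by
        refine rStab_of_ker hd (by omega) hper hx ?_
        show ZMod.castHom hd (ZMod d) (y + 1) = _
        rw [map_add, map_one]
        exact h1.symm
      have hne : y ≠ y + 1 := self_ne_add_one (by omega) y
      exact hind hy hy1 hne (cycle_adj.2 ⟨hne, Or.inl rfl⟩)
  · intro z hz
    have hwX : (z.val : ZMod n) ∉ X := fun h => hz ⟨_, h, pr_lift hd z⟩
    obtain ⟨a, haX, hadj⟩ := hmax _ hwX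
    refine ⟨pr hd a, Set.mem_image_of_mem _ haX, ?_⟩
    have hne : pr hd a ≠ z := fun h => hz ⟨a, haX, h⟩
    rw [cycle_adj] at hadj ⊢
    obtain ⟨-, h1 | h1⟩ := hadj
    · refine ⟨hne, Or.inl ?_⟩
      have h2 := congrArg (pr hd) h1
      rw [pr_lift, pr_add, pr_one] at h2
      exact h2
    · refine ⟨hne, Or.inr ?_⟩
      rw [h1, pr_add, pr_one, pr_lift]

/-- The stabilizer of the image of a periodic axis-free MIS with exact period `d`
is trivial. -/
lemma quot_stab (hn : 3 ≤ n) [NeZero d] {X : Set (ZMod n)}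
    (hnoax : ¬ HasAxis n X)
    (hper : ((d : ℕ) : ZMod n) ∈ rStab n X)
    (hmin : ∀ t : ℕ, 0 < t → t < d → ((t : ℕ) : ZMod n) ∉ rStab n X) :
    dStab d (pr hd '' X) = {((0 : ZMod d), false)} := by
  haveI : NeZero n := ⟨by omega⟩
  apply Set.eq_singleton_iff_unique_mem.2
  refine ⟨dih_one _, ?_⟩
  rintro ⟨k, ε⟩ hg
  have hg' : dihApply d (k, ε) '' (pr hd '' X) = pr hd '' X := hg
  have hpre : dihApply n ((k.val : ZMod n), ε) '' X = X := by
    conv_lhs => rw [← preimage_image_self hd (by omega) hper]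
    rw [dih_preimage, pr_lift, hg', preimage_image_self hd (by omega) hper]
  cases ε
  · have hmem : ((k.val : ℕ) : ZMod n) ∈ rStab n X := mem_rStab.2 hpre
    have hk0 : k.val = 0 := by
      by_contra h0
      exact hmin k.val (Nat.pos_of_ne_zero h0) (ZMod.val_lt k) hmem
    have : k = 0 := (ZMod.val_eq_zero k).1 hk0
    rw [this]
  · exfalso
    exact hnoax ⟨(k.val : ZMod n), by rw [dih_true]; exact hpre⟩

/-- The pushforward of a dihedral orbit is a dihedral orbit. -/
lemma image_dOrbit [NeZero d] (X : Set (ZMod n)) :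
    (fun Y => pr hd '' Y) '' dOrbit n X = dOrbit d (pr hd '' X) := by
  ext Z
  constructor
  · rintro ⟨Y, ⟨g, rfl⟩, rfl⟩
    exact ⟨(pr hd g.1, g.2), (pr_image_dih hd g X).symm⟩
  · rintro ⟨⟨k, ε⟩, rfl⟩
    refine ⟨dihApply n ((k.val : ZMod n), ε) '' X, ⟨_, rfl⟩, ?_⟩
    show pr hd '' (dihApply n ((k.val : ZMod n), ε) '' X) = _
    rw [pr_image_dih, pr_lift]

/-- The preimage of an MIS with trivial dihedral stabilizer is an MIS. -/
lemma lift_isMIS (hn : 3 ≤ n) (hd2 : 2 ≤ d) {X' : Set (ZMod d)} (hX' : IsMIS d X') :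
    IsMIS n (pr hd ⁻¹' X') := by
  obtain ⟨hind, hmax⟩ := (isMIS_iff_s14 X').1 hX'
  rw [isMIS_iff_s14]
  constructor
  · intro x hx y hy hne hadj
    rw [cycle_adj] at hadj
    obtain ⟨-, h1 | h1⟩ := hadj
    · have h2 : pr hd y = pr hd x + 1 := by rw [h1, pr_add, pr_one]
      have hne' : pr hd x ≠ pr hd y := h2 ▸ self_ne_add_one hd2 (pr hd x)
      exact hind hx hy hne' (cycle_adj.2 ⟨hne', Or.inl h2⟩)
    · have h2 : pr hd x = pr hd y + 1 := by rw [h1, pr_add, pr_one]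
      have hne' : pr hd y ≠ pr hd x := h2 ▸ self_ne_add_one hd2 (pr hd y)
      exact hind hy hx hne' (cycle_adj.2 ⟨hne', Or.inl h2⟩)
  · intro z hz
    obtain ⟨a', ha', hadj⟩ := hmax (pr hd z) hz
    rw [cycle_adj] at hadj
    obtain ⟨hne, h1 | h1⟩ := hadj
    · -- pr z = a' + 1, so z - 1 ∈ preimage
      refine ⟨z - 1, ?_, ?_⟩
      · show pr hd (z - 1) ∈ X'
        rw [pr_sub, pr_one, h1]
        simpa using ha'
      · rw [cycle_adj]
        have hne2 : z - 1 ≠ z := fun hcon =>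
          zmod_one_ne_zero (show (2:ℕ) ≤ n by omega) (sub_eq_self.mp hcon)
        exact ⟨hne2, Or.inl (by ring)⟩
    · -- a' = pr z + 1, so z + 1 ∈ preimage
      refine ⟨z + 1, ?_, ?_⟩
      · show pr hd (z + 1) ∈ X'
        rw [pr_add, pr_one, ← h1]
        exact ha'
      · rw [cycle_adj]
        have hne2 : z + 1 ≠ z := fun hcon => (self_ne_add_one (by omega) z) hcon.symm
        exact ⟨hne2, Or.inr rfl⟩

end Reduction2

lemma stab_singleton_of_ncard {d : ℕ} {X' : Set (ZMod d)} (h : (dStab d X').ncard = 1) :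
    dStab d X' = {((0 : ZMod d), false)} := by
  obtain ⟨a, ha⟩ := Set.ncard_eq_one.1 h
  have h0 : ((0 : ZMod d), false) ∈ dStab d X' := dih_one X'
  rw [ha] at h0 ⊢
  rw [Set.mem_singleton_iff] at h0
  rw [h0]

lemma two_le_d {d : ℕ} {X' : Set (ZMod d)} (hd0 : 0 < d) (h : (dStab d X').ncard = 1) :
    2 ≤ d := by
  by_contra hlt
  have hd1 : d = 1 := by omega
  haveI : Subsingleton (ZMod d) := by
    rw [hd1]; exact inferInstanceAs (Subsingleton (Fin 1))
  have hmem : ((0 : ZMod d), true) ∈ dStab d X' := by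
    show dihApply d (0, true) '' X' = X'
    rw [show dihApply d ((0 : ZMod d), true) = id from funext fun x => Subsingleton.elim _ _,
      Set.image_id]
  rw [stab_singleton_of_ncard h, Set.mem_singleton_iff] at hmem
  simpa using hmem

section Reduction3

variable {d : ℕ} (hd : d ∣ n)

lemma dih_preimage' (k : ZMod n) (ε : Bool) (S : Set (ZMod d)) :
    dihApply n (k, ε) '' (pr hd ⁻¹' S) = pr hd ⁻¹' (dihApply d (pr hd k, ε) '' S) :=
  dih_preimage hd (k, ε) S

lemma lift_noaxis (hn : 3 ≤ n) [NeZero d] {X' : Set (ZMod d)}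
    (hstab : dStab d X' = {((0 : ZMod d), false)}) : ¬ HasAxis n (pr hd ⁻¹' X') := by
  rintro ⟨k, hk⟩
  rw [dih_true, dih_preimage'] at hk
  have h2 : dihApply d (pr hd k, true) '' X' = X' :=
    (Set.preimage_eq_preimage (pr_surjective hd)).1 hk
  have h3 : ((pr hd k, true) : ZMod d × Bool) ∈ dStab d X' := h2
  rw [hstab, Set.mem_singleton_iff] at h3
  simpa using h3

lemma lift_minP (hn : 3 ≤ n) (hd0 : 0 < d) {X' : Set (ZMod d)}
    (hstab : dStab d X' = {((0 : ZMod d), false)}) : minP n (pr hd ⁻¹' X') = d := by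
  haveI : NeZero d := ⟨hd0.ne'⟩
  have e1 : pr hd ((d : ℕ) : ZMod n) = 0 := by
    rw [pr_natCast]; exact ZMod.natCast_self d
  have hper : ((d : ℕ) : ZMod n) ∈ rStab n (pr hd ⁻¹' X') := by
    rw [mem_rStab, dih_preimage', e1, dih_one]
  have hmin : ∀ t : ℕ, 0 < t → t < d → ((t : ℕ) : ZMod n) ∉ rStab n (pr hd ⁻¹' X') := by
    intro t ht htd hmem
    rw [mem_rStab, dih_preimage'] at hmem
    have h2 : dihApply d (pr hd ((t : ℕ) : ZMod n), false) '' X' = X' :=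
      (Set.preimage_eq_preimage (pr_surjective hd)).1 hmem
    have h3 : ((pr hd ((t : ℕ) : ZMod n), false) : ZMod d × Bool) ∈ dStab d X' := h2
    rw [hstab, Set.mem_singleton_iff] at h3
    have h4 : ((t : ℕ) : ZMod d) = 0 := by
      have h5 := congrArg Prod.fst h3
      rwa [pr_natCast] at h5
    rw [ZMod.natCast_eq_zero_iff] at h4
    have := Nat.le_of_dvd ht h4
    omega
  have hdmem : d ∈ perSet n (pr hd ⁻¹' X') := ⟨hd0, hper⟩
  have hinf := Nat.sInf_mem (⟨d, hdmem⟩ : (perSet n (pr hd ⁻¹' X')).Nonempty)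
  have hle : minP n (pr hd ⁻¹' X') ≤ d := Nat.sInf_le hdmem
  obtain ⟨h1, h2⟩ := hinf
  have hdefeq : minP n (pr hd ⁻¹' X') = sInf (perSet n (pr hd ⁻¹' X')) := rfl
  by_contra hne
  exact hmin _ h1 (by omega) h2

end Reduction3

/-- Orbits with a symmetry axis. -/
def Aset (n : ℕ) : Set (Set (Set (ZMod n))) :=
  {O | ∃ X, IsMIS n X ∧ O = dOrbit n X ∧ HasAxis n X}

/-- Orbits without an axis and with exact rotation period `d`. -/
def Bset (n d : ℕ) : Set (Set (Set (ZMod n))) :=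
  {O | ∃ X, IsMIS n X ∧ O = dOrbit n X ∧ ¬ HasAxis n X ∧ minP n X = d}

lemma rep_of_dOrbit_eq {X Y : Set (ZMod n)} (h : dOrbit n X = dOrbit n Y) :
    ∃ g, X = dihApply n g '' Y := by
  have hX : X ∈ dOrbit n Y := h ▸ mem_dOrbit_self X
  obtain ⟨g, hg⟩ := hX
  exact ⟨g, hg.symm⟩

lemma ncard_Bset (hn : 3 ≤ n) {d : ℕ} (hdn : d ∣ n) : (Bset n d).ncard = orbd 1 d := by
  haveI : NeZero n := ⟨by omega⟩
  have hd0 : 0 < d := Nat.pos_of_dvd_of_pos hdn (by omega)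
  haveI : NeZero d := ⟨hd0.ne'⟩
  have hper : ∀ X : Set (ZMod n), minP n X = d → ((d : ℕ) : ZMod n) ∈ rStab n X := by
    intro X hX
    have := (minP_mem (show 0 < n by omega) X).2
    rwa [hX] at this
  have hmin : ∀ X : Set (ZMod n), minP n X = d →
      ∀ t : ℕ, 0 < t → t < d → ((t : ℕ) : ZMod n) ∉ rStab n X := by
    intro X hX t ht htd hmem
    have h1 := minP_dvd (show 0 < n by omega) hmem
    rw [hX] at h1
    have := Nat.le_of_dvd ht h1
    omega
  have hinj : Set.InjOn (fun O => (fun Y => pr hdn '' Y) '' O) (Bset n d) := by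
    rintro O1 ⟨X1, hX1, rfl, hax1, hm1⟩ O2 ⟨X2, hX2, rfl, hax2, hm2⟩ heq
    dsimp only at heq
    rw [image_dOrbit, image_dOrbit] at heq
    have hmem : pr hdn '' X2 ∈ dOrbit d (pr hdn '' X1) := heq ▸ mem_dOrbit_self _
    obtain ⟨⟨k, ε⟩, hg⟩ := hmem
    have e1 : pr hdn ⁻¹' (pr hdn '' X1) = X1 :=
      preimage_image_self hdn (by omega) (hper X1 hm1)
    have e2 : pr hdn ⁻¹' (pr hdn '' X2) = X2 :=
      preimage_image_self hdn (by omega) (hper X2 hm2)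
    have hX2eq : dihApply n ((k.val : ZMod n), ε) '' X1 = X2 := by
      rw [← e1, dih_preimage', pr_lift]
      rw [show dihApply d (k, ε) '' (pr hdn '' X1) = pr hdn '' X2 from hg, e2]
    rw [← hX2eq, dOrbit_image]
  have himg : (fun O => (fun Y => pr hdn '' Y) '' O) '' (Bset n d)
      = {O | ∃ X, IsMIS d X ∧ O = dOrbit d X ∧ (dStab d X).ncard = 1} := by
    ext Z
    constructor
    · rintro ⟨O, ⟨X, hX, rfl, hax, hm⟩, rfl⟩
      refine ⟨pr hdn '' X, quot_isMIS hdn hn hX (hper X hm), image_dOrbit hdn X, ?_⟩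
      rw [quot_stab hdn hn hax (hper X hm) (hmin X hm)]
      exact Set.ncard_singleton _
    · rintro ⟨X', hX', rfl, hstab⟩
      have hsing := stab_singleton_of_ncard hstab
      have hd2 : 2 ≤ d := two_le_d hd0 hstab
      refine ⟨dOrbit n (pr hdn ⁻¹' X'),
        ⟨pr hdn ⁻¹' X', lift_isMIS hdn hn hd2 hX', rfl,
          lift_noaxis hdn hn hsing, lift_minP hdn hn hd0 hsing⟩, ?_⟩
      show (fun Y => pr hdn '' Y) '' dOrbit n (pr hdn ⁻¹' X') = dOrbit d X'
      rw [image_dOrbit, Set.image_preimage_eq X' (pr_surjective hdn)]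
  calc (Bset n d).ncard
      = ((fun O => (fun Y => pr hdn '' Y) '' O) '' (Bset n d)).ncard :=
        (Set.ncard_image_of_injOn hinj).symm
    _ = orbd 1 d := by rw [himg]; rfl

lemma Bset_disjoint (hn : 3 ≤ n) {d e : ℕ} (hde : d ≠ e) :
    Disjoint (Bset n d) (Bset n e) := by
  rw [Set.disjoint_left]
  rintro O ⟨X, hX, rfl, hax, hm⟩ ⟨Y, hY, hOY, hay, hmY⟩
  obtain ⟨g, rfl⟩ := rep_of_dOrbit_eq hOY
  rw [minP_image] at hm
  exact hde (by rw [← hm, hmY])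

lemma A_B_disjoint (hn : 3 ≤ n) {d : ℕ} : Disjoint (Aset n) (Bset n d) := by
  rw [Set.disjoint_left]
  rintro O ⟨X, hX, rfl, haxX⟩ ⟨Y, hY, hOY, hay, hmY⟩
  obtain ⟨g, rfl⟩ := rep_of_dOrbit_eq hOY
  rw [hasAxis_image_iff] at haxX
  exact hay haxX

lemma misOrbits_decomp (hn : 3 ≤ n) :
    misOrbits n = Aset n ∪ ⋃ d ∈ n.divisors, Bset n d := by
  ext O
  constructor
  · rintro ⟨X, hX, rfl⟩
    by_cases hax : HasAxis n X
    · exact Or.inl ⟨X, hX, rfl, hax⟩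
    · refine Or.inr ?_
      have hdiv : minP n X ∈ n.divisors := by
        refine Nat.mem_divisors.2 ⟨?_, by omega⟩
        exact minP_dvd (by omega) (by rw [ZMod.natCast_self]; exact rStab_zero X)
      simp only [Set.mem_iUnion]
      exact ⟨minP n X, hdiv, X, hX, rfl, hax, rfl⟩
  · rintro (⟨X, hX, hO, -⟩ | hO)
    · exact ⟨X, hX, hO⟩
    · simp only [Set.mem_iUnion] at hO
      obtain ⟨d, -, X, hX, hO, -, -⟩ := hO
      exact ⟨X, hX, hO⟩

lemma aux_ncard_biUnion {β : Type*} [Finite β] (f : ℕ → Set β) :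
    ∀ s : Finset ℕ, (∀ a ∈ s, ∀ b ∈ s, a ≠ b → Disjoint (f a) (f b)) →
      (⋃ a ∈ s, f a).ncard = ∑ a ∈ s, (f a).ncard := by
  intro s
  induction s using Finset.induction_on with
  | empty => intro _; simp
  | @insert a s ha ih =>
    intro hdisj
    have hd2 : Disjoint (f a) (⋃ b ∈ s, f b) := by
      simp only [Set.disjoint_iUnion_right]
      intro b hb
      exact hdisj a (Finset.mem_insert_self a s) b (Finset.mem_insert_of_mem hb)
        (fun h => ha (h ▸ hb))
    rw [Finset.sum_insert ha, Finset.set_biUnion_insert,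
      Set.ncard_union_eq hd2 (Set.toFinite _) (Set.toFinite _),
      ih (fun x hx y hy hxy =>
        hdisj x (Finset.mem_insert_of_mem hx) y (Finset.mem_insert_of_mem hy) hxy)]

end Aux

/-- orb = r + orb_1 ∗ 1 : the number of orbits of MISs of C_n equals the number of orbits
with a symmetry axis plus Σ_{d | n} orb_1(d). -/
theorem orb_eq_axis_plus_conv (n : ℕ) (hn : 3 ≤ n) :
    orb n = orbAxis n + ∑ d ∈ n.divisors, orbd 1 d := by
  haveI : NeZero n := ⟨by omega⟩
  have hA : Disjoint (Aset n) (⋃ d ∈ n.divisors, Bset n d) := by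
    simp only [Set.disjoint_iUnion_right]
    intro d _
    exact A_B_disjoint hn
  rw [orb, misOrbits_decomp hn,
    Set.ncard_union_eq hA (Set.toFinite _) (Set.toFinite _),
    aux_ncard_biUnion (fun d => Bset n d) n.divisors
      (fun a _ b _ hab => Bset_disjoint hn hab)]
  congr 1
  exact Finset.sum_congr rfl fun d hd => ncard_Bset hn (Nat.mem_divisors.1 hd).1
end
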